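/- arXiv:1509.00149 — 10 statements merged into one kernel-verified Lean document; each statement's English description precedes it below -/
import Mathlib

section
/- Let ε ≥ 0 and let v be a value of the matrix game certified by optimal strategies. Suppose the action sequences i : ℕ → A and j : ℕ → B satisfy limsup_{t→∞} r₁(t) ≤ ε and limsup_{t→∞} r₂(t) ≤ ε. Then v − ε ≤ liminf_{t→∞} g(t) and limsup_{t→∞} g(t) ≤ v + ε. (Lemma 4, inequalities (4): a deterministic rendering of the statement that two ε-Hannan consistent players in a matrix game have average payoff converging into [v−ε, v+ε].) -/
open Finset Filter

/-- **Lemma 4, inequalities (4).**  Two ε-Hannan consistent players in a matrix game with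
value `v` (certified by optimal strategies `pstar`, `qstar`) have average payoff
eventually in `[v - ε, v + ε]`:  if both average regrets have `limsup ≤ ε`, then
`v - ε ≤ liminf g(t)` and `limsup g(t) ≤ v + ε`. -/
theorem stmt_0 {A B : Type*} [Fintype A] [Fintype B] [Nonempty A] [Nonempty B]
    (a : A → B → ℝ) (ha : ∀ i j, a i j ∈ Set.Icc (0 : ℝ) 1)
    (ε : ℝ) (hε : 0 ≤ ε) (v : ℝ)
    (pstar : A → ℝ) (hp0 : ∀ i, 0 ≤ pstar i) (hp1 : ∑ i, pstar i = 1)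
    (qstar : B → ℝ) (hq0 : ∀ j, 0 ≤ qstar j) (hq1 : ∑ j, qstar j = 1)
    (hpv : ∀ j, v ≤ ∑ i, pstar i * a i j)
    (hqv : ∀ i, ∑ j, qstar j * a i j ≤ v)
    (i : ℕ → A) (j : ℕ → B)
    (g r₁ r₂ : ℕ → ℝ)
    (hg : ∀ t, g t = (∑ s ∈ Finset.Icc 1 t, a (i s) (j s)) / t)
    (hr₁ : ∀ t, r₁ t =
      ((univ.sup' univ_nonempty fun i₀ => ∑ s ∈ Finset.Icc 1 t, a i₀ (j s))
        - ∑ s ∈ Finset.Icc 1 t, a (i s) (j s)) / t)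
    (hr₂ : ∀ t, r₂ t =
      ((∑ s ∈ Finset.Icc 1 t, a (i s) (j s))
        - univ.inf' univ_nonempty fun j₀ => ∑ s ∈ Finset.Icc 1 t, a (i s) j₀) / t)
    (h1 : limsup r₁ atTop ≤ ε)
    (h2 : limsup r₂ atTop ≤ ε) :
    v - ε ≤ liminf g atTop ∧ limsup g atTop ≤ v + ε := by
  have hcard : ∀ t : ℕ, (Finset.Icc 1 t).card = t := by
    intro t; rw [Nat.card_Icc]; omega
  -- basic bounds on partial sums
  have hS0 : ∀ t : ℕ, (0:ℝ) ≤ ∑ s ∈ Finset.Icc 1 t, a (i s) (j s) :=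
    fun t => Finset.sum_nonneg fun s _ => (ha _ _).1
  have hS1 : ∀ t : ℕ, (∑ s ∈ Finset.Icc 1 t, a (i s) (j s)) ≤ t := by
    intro t
    calc (∑ s ∈ Finset.Icc 1 t, a (i s) (j s)) ≤ ∑ s ∈ Finset.Icc 1 t, 1 :=
          Finset.sum_le_sum fun s _ => (ha _ _).2
      _ = t := by rw [Finset.sum_const, hcard]; simp
  -- g bounds
  have hg0 : ∀ t, 0 ≤ g t := fun t => by
    rw [hg]; exact div_nonneg (hS0 t) (Nat.cast_nonneg t)
  have hg1 : ∀ t, g t ≤ 1 := by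
    intro t
    rcases Nat.eq_zero_or_pos t with rfl | ht
    · simp [hg]
    · rw [hg, div_le_one (by exact_mod_cast ht)]; exact hS1 t
  -- key pointwise inequalities for t ≥ 1
  have key1 : ∀ t : ℕ, 1 ≤ t → v - r₁ t ≤ g t := by
    intro t ht
    have ht' : (0:ℝ) < t := by exact_mod_cast ht
    have hsup : (t:ℝ) * v ≤
        univ.sup' univ_nonempty fun i₀ => ∑ s ∈ Finset.Icc 1 t, a i₀ (j s) := by
      calc (t:ℝ) * v = ∑ _s ∈ Finset.Icc 1 t, v := by rw [Finset.sum_const, hcard]; ring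
        _ ≤ ∑ s ∈ Finset.Icc 1 t, ∑ i₀, pstar i₀ * a i₀ (j s) :=
            Finset.sum_le_sum fun s _ => hpv _
        _ = ∑ i₀, pstar i₀ * ∑ s ∈ Finset.Icc 1 t, a i₀ (j s) := by
            rw [Finset.sum_comm]; simp [Finset.mul_sum]
        _ ≤ ∑ i₀, pstar i₀ *
              (univ.sup' univ_nonempty fun i₀ => ∑ s ∈ Finset.Icc 1 t, a i₀ (j s)) :=
            Finset.sum_le_sum fun i₀ _ =>
              mul_le_mul_of_nonneg_left (Finset.le_sup' (fun i₀ => ∑ s ∈ Finset.Icc 1 t, a i₀ (j s)) (mem_univ i₀)) (hp0 i₀)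
        _ = _ := by rw [← Finset.sum_mul, hp1, one_mul]
    have hvd : v ≤ (univ.sup' univ_nonempty fun i₀ => ∑ s ∈ Finset.Icc 1 t, a i₀ (j s)) / t :=
      (le_div_iff₀ ht').2 (by linarith [hsup])
    rw [hr₁, hg, sub_div] at *
    linarith
  have key2 : ∀ t : ℕ, 1 ≤ t → g t ≤ v + r₂ t := by
    intro t ht
    have ht' : (0:ℝ) < t := by exact_mod_cast ht
    have hinf : (univ.inf' univ_nonempty fun j₀ => ∑ s ∈ Finset.Icc 1 t, a (i s) j₀)
        ≤ (t:ℝ) * v := by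
      calc (univ.inf' univ_nonempty fun j₀ => ∑ s ∈ Finset.Icc 1 t, a (i s) j₀)
          = ∑ j₀, qstar j₀ *
              (univ.inf' univ_nonempty fun j₀ => ∑ s ∈ Finset.Icc 1 t, a (i s) j₀) := by
            rw [← Finset.sum_mul, hq1, one_mul]
        _ ≤ ∑ j₀, qstar j₀ * ∑ s ∈ Finset.Icc 1 t, a (i s) j₀ :=
            Finset.sum_le_sum fun j₀ _ =>
              mul_le_mul_of_nonneg_left (Finset.inf'_le (fun j₀ => ∑ s ∈ Finset.Icc 1 t, a (i s) j₀) (mem_univ j₀)) (hq0 j₀)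
        _ = ∑ s ∈ Finset.Icc 1 t, ∑ j₀, qstar j₀ * a (i s) j₀ := by
            rw [Finset.sum_comm]; simp [Finset.mul_sum]
        _ ≤ ∑ _s ∈ Finset.Icc 1 t, v := Finset.sum_le_sum fun s _ => hqv _
        _ = (t:ℝ) * v := by rw [Finset.sum_const, hcard]; ring
    have hvd : (univ.inf' univ_nonempty fun j₀ => ∑ s ∈ Finset.Icc 1 t, a (i s) j₀) / t ≤ v :=
      (div_le_iff₀ ht').2 (by linarith [hinf])
    rw [hr₂, hg, sub_div] at *
    linarith
  -- bounds on r₁, r₂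
  have hr1le : ∀ t, r₁ t ≤ 1 := by
    intro t
    rcases Nat.eq_zero_or_pos t with rfl | ht
    · simp [hr₁]
    · have ht' : (0:ℝ) < t := by exact_mod_cast ht
      rw [hr₁, div_le_one ht']
      have hsup : (univ.sup' univ_nonempty fun i₀ => ∑ s ∈ Finset.Icc 1 t, a i₀ (j s))
          ≤ (t:ℝ) := by
        apply Finset.sup'_le
        intro i₀ _
        calc (∑ s ∈ Finset.Icc 1 t, a i₀ (j s)) ≤ ∑ s ∈ Finset.Icc 1 t, 1 :=
              Finset.sum_le_sum fun s _ => (ha _ _).2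
          _ = t := by rw [Finset.sum_const, hcard]; simp
      linarith [hS0 t]
  have hr2le : ∀ t, r₂ t ≤ 1 := by
    intro t
    rcases Nat.eq_zero_or_pos t with rfl | ht
    · simp [hr₂]
    · have ht' : (0:ℝ) < t := by exact_mod_cast ht
      rw [hr₂, div_le_one ht']
      have hinf : (0:ℝ) ≤ univ.inf' univ_nonempty fun j₀ => ∑ s ∈ Finset.Icc 1 t, a (i s) j₀ :=
        Finset.le_inf' _ _ fun j₀ _ => Finset.sum_nonneg fun s _ => (ha _ _).1
      linarith [hS1 t]
  -- boundedness facts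
  have hgbddA : IsBoundedUnder (· ≤ ·) atTop g := isBoundedUnder_of ⟨1, fun t => hg1 t⟩
  have hgbddB : IsBoundedUnder (· ≥ ·) atTop g := isBoundedUnder_of ⟨0, fun t => hg0 t⟩
  have hgcobA : IsCoboundedUnder (· ≤ ·) atTop g := hgbddB.isCoboundedUnder_le
  have hgcobB : IsCoboundedUnder (· ≥ ·) atTop g := hgbddA.isCoboundedUnder_ge
  have hr1bddA : IsBoundedUnder (· ≤ ·) atTop r₁ := isBoundedUnder_of ⟨1, fun t => hr1le t⟩
  have hr2bddA : IsBoundedUnder (· ≤ ·) atTop r₂ := isBoundedUnder_of ⟨1, fun t => hr2le t⟩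
  have hr1cobA : IsCoboundedUnder (· ≤ ·) atTop r₁ := by
    have hb : IsBoundedUnder (· ≥ ·) atTop r₁ := by
      apply isBoundedUnder_of_eventually_ge (a := -1)
      filter_upwards [eventually_ge_atTop 1] with t ht
      have := key1 t ht
      have := hg1 t
      have hv0 : 0 ≤ v := by
        have := hqv (Classical.arbitrary A)
        have h0 : (0:ℝ) ≤ ∑ j₀, qstar j₀ * a (Classical.arbitrary A) j₀ :=
          Finset.sum_nonneg fun j₀ _ => mul_nonneg (hq0 j₀) (ha _ _).1
        linarith
      linarith
    exact hb.isCoboundedUnder_le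
  have hr2cobA : IsCoboundedUnder (· ≤ ·) atTop r₂ := by
    have hb : IsBoundedUnder (· ≥ ·) atTop r₂ := by
      apply isBoundedUnder_of_eventually_ge (a := -1)
      filter_upwards [eventually_ge_atTop 1] with t ht
      have := key2 t ht
      have := hg0 t
      have hv1 : v ≤ 1 := by
        have := hpv (Classical.arbitrary B)
        have h1' : (∑ i₀, pstar i₀ * a i₀ (Classical.arbitrary B)) ≤ 1 := by
          calc (∑ i₀, pstar i₀ * a i₀ (Classical.arbitrary B)) ≤ ∑ i₀, pstar i₀ := by
                apply Finset.sum_le_sum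
                intro i₀ _
                exact mul_le_of_le_one_right (hp0 i₀) (ha _ _).2
            _ = 1 := hp1
        linarith
      linarith
    exact hb.isCoboundedUnder_le
  constructor
  · -- v - ε ≤ liminf g
    have h1' : liminf (fun t => v - r₁ t) atTop ≤ liminf g atTop := by
      apply liminf_le_liminf
      · filter_upwards [eventually_ge_atTop 1] with t ht using key1 t ht
      · apply isBoundedUnder_of_eventually_ge (a := v - 1)
        filter_upwards with t using by linarith [hr1le t]
      · exact hgcobB
    have heq : liminf (fun t => v - r₁ t) atTop = v - limsup r₁ atTop :=
      liminf_const_sub atTop r₁ v hr1bddA hr1cobA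
    rw [heq] at h1'
    linarith
  · -- limsup g ≤ v + ε
    have h2' : limsup g atTop ≤ limsup (fun t => v + r₂ t) atTop := by
      apply limsup_le_limsup
      · filter_upwards [eventually_ge_atTop 1] with t ht using key2 t ht
      · exact hgcobA
      · apply isBoundedUnder_of_eventually_le (a := v + 1)
        filter_upwards with t using by linarith [hr2le t]
    have heq : limsup (fun t => v + r₂ t) atTop = v + limsup r₂ atTop :=
      limsup_const_add atTop r₂ v hr2bddA hr2cobA
    rw [heq] at h2'
    linarith
end

section
/- Let ε ≥ 0 and let v be a value of the matrix game certified by optimal strategies. Suppose the action sequences i : ℕ → A and j : ℕ → B satisfy limsup_{t→∞} r₁(t) ≤ ε and limsup_{t→∞} r₂(t) ≤ ε. Then liminf_{t→∞} u(σ̂₁(t), br) ≥ v − 2ε and limsup_{t→∞} u(br, σ̂₂(t)) ≤ v + 2ε. (Lemma 4, inequalities (5): the best responses to the empirical frequencies of two ε-Hannan consistent players eventually come within 2ε of the game value.) -/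
open Finset Filter

lemma fiber_sum {α : Type*} [Fintype α] [DecidableEq α] (t : ℕ) (f : ℕ → α) (c : α → ℝ) :
    ∑ x : α, (((Finset.Icc 1 t).filter fun s => f s = x).card : ℝ) * c x
      = ∑ s ∈ Finset.Icc 1 t, c (f s) := by
  calc ∑ x : α, (((Finset.Icc 1 t).filter fun s => f s = x).card : ℝ) * c x
      = ∑ x : α, ∑ s ∈ (Finset.Icc 1 t).filter (fun s => f s = x), c (f s) := by
        refine Finset.sum_congr rfl fun x _ => ?_
        rw [Finset.sum_congr rfl (fun s hs => by rw [(Finset.mem_filter.1 hs).2]),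
          Finset.sum_const, nsmul_eq_mul]
    _ = ∑ s ∈ Finset.Icc 1 t, c (f s) :=
        Finset.sum_fiberwise_of_maps_to (fun s _ => Finset.mem_univ _) _

/-- **Lemma 4, inequalities (5).**  If both players' average regrets have `limsup ≤ ε`
in a matrix game with value `v`, then the best-response utilities against the empirical
frequencies eventually come within `2ε` of the game value:
`liminf u(σ̂₁(t), br) ≥ v - 2ε` and `limsup u(br, σ̂₂(t)) ≤ v + 2ε`. -/
theorem stmt_1 {A B : Type*} [Fintype A] [Fintype B] [Nonempty A] [Nonempty B]
    [DecidableEq A] [DecidableEq B]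
    (a : A → B → ℝ) (ha : ∀ i j, a i j ∈ Set.Icc (0 : ℝ) 1)
    (ε : ℝ) (hε : 0 ≤ ε) (v : ℝ)
    (pstar : A → ℝ) (hp0 : ∀ i, 0 ≤ pstar i) (hp1 : ∑ i, pstar i = 1)
    (qstar : B → ℝ) (hq0 : ∀ j, 0 ≤ qstar j) (hq1 : ∑ j, qstar j = 1)
    (hpv : ∀ j, v ≤ ∑ i, pstar i * a i j)
    (hqv : ∀ i, ∑ j, qstar j * a i j ≤ v)
    (i : ℕ → A) (j : ℕ → B)
    (r₁ r₂ : ℕ → ℝ)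
    (hr₁ : ∀ t, r₁ t =
      ((univ.sup' univ_nonempty fun i₀ => ∑ s ∈ Finset.Icc 1 t, a i₀ (j s))
        - ∑ s ∈ Finset.Icc 1 t, a (i s) (j s)) / t)
    (hr₂ : ∀ t, r₂ t =
      ((∑ s ∈ Finset.Icc 1 t, a (i s) (j s))
        - univ.inf' univ_nonempty fun j₀ => ∑ s ∈ Finset.Icc 1 t, a (i s) j₀) / t)
    (h1 : limsup r₁ atTop ≤ ε)
    (h2 : limsup r₂ atTop ≤ ε)
    (σ₁ : ℕ → A → ℝ) (σ₂ : ℕ → B → ℝ)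
    (hσ₁ : ∀ t i₀, σ₁ t i₀ = (((Finset.Icc 1 t).filter (fun s => i s = i₀)).card : ℝ) / t)
    (hσ₂ : ∀ t j₀, σ₂ t j₀ = (((Finset.Icc 1 t).filter (fun s => j s = j₀)).card : ℝ) / t) :
    v - 2 * ε ≤
      liminf (fun t => univ.inf' univ_nonempty fun j₀ => ∑ i₀, σ₁ t i₀ * a i₀ j₀) atTop ∧
    limsup (fun t => univ.sup' univ_nonempty fun i₀ => ∑ j₀, σ₂ t j₀ * a i₀ j₀) atTop ≤
      v + 2 * ε := by
  set M : ℕ → ℝ := fun t => univ.sup' univ_nonempty fun i₀ => ∑ s ∈ Finset.Icc 1 t, a i₀ (j s)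
    with hM
  set m : ℕ → ℝ := fun t => univ.inf' univ_nonempty fun j₀ => ∑ s ∈ Finset.Icc 1 t, a (i s) j₀
    with hm
  set S : ℕ → ℝ := fun t => ∑ s ∈ Finset.Icc 1 t, a (i s) (j s) with hS
  set f₁ : ℕ → ℝ := fun t => univ.inf' univ_nonempty fun j₀ => ∑ i₀, σ₁ t i₀ * a i₀ j₀ with hf₁
  set f₂ : ℕ → ℝ := fun t => univ.sup' univ_nonempty fun i₀ => ∑ j₀, σ₂ t j₀ * a i₀ j₀ with hf₂
  have hcard : ∀ t : ℕ, ((Finset.Icc 1 t).card : ℝ) = t := by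
    intro t; rw [Nat.card_Icc]; simp
  -- basic bounds
  have hS0 : ∀ t, 0 ≤ S t := fun t =>
    Finset.sum_nonneg fun s _ => (ha _ _).1
  have hSt : ∀ t, S t ≤ t := by
    intro t
    calc S t ≤ (Finset.Icc 1 t).card • (1:ℝ) :=
          Finset.sum_le_card_nsmul _ _ _ fun s _ => (ha _ _).2
      _ = t := by rw [nsmul_eq_mul, mul_one, hcard]
  have hMt : ∀ t, M t ≤ t := by
    intro t
    refine Finset.sup'_le _ _ fun i₀ _ => ?_
    calc (∑ s ∈ Finset.Icc 1 t, a i₀ (j s)) ≤ (Finset.Icc 1 t).card • (1:ℝ) :=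
          Finset.sum_le_card_nsmul _ _ _ fun s _ => (ha _ _).2
      _ = t := by rw [nsmul_eq_mul, mul_one, hcard]
  have hm0 : ∀ t, 0 ≤ m t :=
    fun t => Finset.le_inf' _ _ fun j₀ _ => Finset.sum_nonneg fun s _ => (ha _ _).1
  have hr₁ub : ∀ t, r₁ t ≤ 1 := by
    intro t; rw [hr₁]
    exact div_le_one_of_le₀ (by linarith [hMt t, hS0 t]) (Nat.cast_nonneg t)
  have hr₂ub : ∀ t, r₂ t ≤ 1 := by
    intro t; rw [hr₂]
    exact div_le_one_of_le₀ (by linarith [hSt t, hm0 t]) (Nat.cast_nonneg t)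
  -- value bounds on M, m
  have hMv : ∀ t : ℕ, 1 ≤ t → (t:ℝ) * v ≤ M t := by
    intro t ht
    calc (t:ℝ) * v = ∑ s ∈ Finset.Icc 1 t, v := by
          rw [Finset.sum_const, nsmul_eq_mul, hcard]
      _ ≤ ∑ s ∈ Finset.Icc 1 t, ∑ i₀, pstar i₀ * a i₀ (j s) :=
          Finset.sum_le_sum fun s _ => hpv (j s)
      _ = ∑ i₀, pstar i₀ * ∑ s ∈ Finset.Icc 1 t, a i₀ (j s) := by
          rw [Finset.sum_comm]; simp_rw [Finset.mul_sum]
      _ ≤ ∑ i₀, pstar i₀ * M t :=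
          Finset.sum_le_sum fun i₀ _ =>
            mul_le_mul_of_nonneg_left
              (Finset.le_sup' (fun i₁ => ∑ s ∈ Finset.Icc 1 t, a i₁ (j s))
                (Finset.mem_univ i₀)) (hp0 i₀)
      _ = M t := by rw [← Finset.sum_mul, hp1, one_mul]
  have hmv : ∀ t : ℕ, 1 ≤ t → m t ≤ (t:ℝ) * v := by
    intro t ht
    calc m t = ∑ j₀, qstar j₀ * m t := by rw [← Finset.sum_mul, hq1, one_mul]
      _ ≤ ∑ j₀, qstar j₀ * ∑ s ∈ Finset.Icc 1 t, a (i s) j₀ :=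
          Finset.sum_le_sum fun j₀ _ =>
            mul_le_mul_of_nonneg_left
              (Finset.inf'_le (fun j₁ => ∑ s ∈ Finset.Icc 1 t, a (i s) j₁)
                (Finset.mem_univ j₀)) (hq0 j₀)
      _ = ∑ s ∈ Finset.Icc 1 t, ∑ j₀, qstar j₀ * a (i s) j₀ := by
          simp_rw [Finset.mul_sum]; rw [Finset.sum_comm]
      _ ≤ ∑ s ∈ Finset.Icc 1 t, v := Finset.sum_le_sum fun s _ => hqv (i s)
      _ = (t:ℝ) * v := by rw [Finset.sum_const, nsmul_eq_mul, hcard]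
  -- value identities for the empirical sums
  have hval₁ : ∀ t : ℕ, ∀ j₀, ∑ i₀, σ₁ t i₀ * a i₀ j₀
      = (∑ s ∈ Finset.Icc 1 t, a (i s) j₀) / t := by
    intro t j₀
    simp_rw [hσ₁, div_mul_eq_mul_div, ← Finset.sum_div]
    rw [fiber_sum]
  have hval₂ : ∀ t : ℕ, ∀ i₀, ∑ j₀, σ₂ t j₀ * a i₀ j₀
      = (∑ s ∈ Finset.Icc 1 t, a i₀ (j s)) / t := by
    intro t i₀
    simp_rw [hσ₂, div_mul_eq_mul_div, ← Finset.sum_div]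
    rw [fiber_sum]
  -- pointwise key bounds
  have key1 : ∀ t : ℕ, 1 ≤ t → v - r₁ t - r₂ t ≤ f₁ t := by
    intro t ht
    have hT : (0:ℝ) < t := by exact_mod_cast ht
    refine Finset.le_inf' _ _ fun j₀ _ => ?_
    rw [hval₁ t j₀]
    have h1' : m t ≤ ∑ s ∈ Finset.Icc 1 t, a (i s) j₀ :=
      Finset.inf'_le _ (Finset.mem_univ j₀)
    have e : v - r₁ t - r₂ t = ((t:ℝ) * v - (M t - m t)) / t := by
      rw [hr₁, hr₂]; field_simp; ring
    rw [e]
    gcongr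
    linarith [hMv t ht]
  have key2 : ∀ t : ℕ, 1 ≤ t → f₂ t ≤ v + r₁ t + r₂ t := by
    intro t ht
    have hT : (0:ℝ) < t := by exact_mod_cast ht
    refine Finset.sup'_le _ _ fun i₀ _ => ?_
    rw [hval₂ t i₀]
    have h1' : ∑ s ∈ Finset.Icc 1 t, a i₀ (j s) ≤ M t :=
      Finset.le_sup' (fun i₁ => ∑ s ∈ Finset.Icc 1 t, a i₁ (j s)) (Finset.mem_univ i₀)
    have e : v + r₁ t + r₂ t = ((t:ℝ) * v + (M t - m t)) / t := by
      rw [hr₁, hr₂]; field_simp; ring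
    rw [e]
    gcongr
    linarith [hmv t ht]
  -- bounds on f₁ f₂
  have hf₁lb : ∀ t, 0 ≤ f₁ t := by
    intro t
    refine Finset.le_inf' _ _ fun j₀ _ => Finset.sum_nonneg fun i₀ _ => ?_
    exact mul_nonneg (by rw [hσ₁]; positivity) (ha _ _).1
  have hf₂lb : ∀ t, 0 ≤ f₂ t := by
    intro t
    refine le_trans ?_ (Finset.le_sup' _ (Finset.mem_univ (Classical.arbitrary A)))
    exact Finset.sum_nonneg fun j₀ _ => mul_nonneg (by rw [hσ₂]; positivity) (ha _ _).1
  have hf₁ub : ∀ t, f₁ t ≤ 1 := by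
    intro t
    refine le_trans (Finset.inf'_le _ (Finset.mem_univ (Classical.arbitrary B))) ?_
    calc ∑ i₀, σ₁ t i₀ * a i₀ (Classical.arbitrary B)
        ≤ ∑ i₀, σ₁ t i₀ * 1 := Finset.sum_le_sum fun i₀ _ =>
          mul_le_mul_of_nonneg_left (ha _ _).2 (by rw [hσ₁]; positivity)
      _ ≤ 1 := by
          simp_rw [mul_one, hσ₁, ← Finset.sum_div]
          rw [← Nat.cast_sum, ← Finset.card_eq_sum_card_fiberwise
            (fun s _ => Finset.mem_univ (i s))]
          rw [hcard]
          exact div_le_one_of_le₀ le_rfl (Nat.cast_nonneg t)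
  have hf₂ub : ∀ t, f₂ t ≤ 1 := by
    intro t
    refine Finset.sup'_le _ _ fun i₀ _ => ?_
    calc ∑ j₀, σ₂ t j₀ * a i₀ j₀
        ≤ ∑ j₀, σ₂ t j₀ * 1 := Finset.sum_le_sum fun j₀ _ =>
          mul_le_mul_of_nonneg_left (ha _ _).2 (by rw [hσ₂]; positivity)
      _ ≤ 1 := by
          simp_rw [mul_one, hσ₂, ← Finset.sum_div]
          rw [← Nat.cast_sum, ← Finset.card_eq_sum_card_fiberwise
            (fun s _ => Finset.mem_univ (j s))]
          rw [hcard]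
          exact div_le_one_of_le₀ le_rfl (Nat.cast_nonneg t)
  have hbd₁ : IsBoundedUnder (· ≤ ·) atTop r₁ := isBoundedUnder_of ⟨1, hr₁ub⟩
  have hbd₂ : IsBoundedUnder (· ≤ ·) atTop r₂ := isBoundedUnder_of ⟨1, hr₂ub⟩
  constructor
  · refine le_of_forall_pos_le_add fun δ hδ => ?_
    have e1 : ∀ᶠ t in atTop, r₁ t < ε + δ / 2 :=
      eventually_lt_of_limsup_lt (lt_of_le_of_lt h1 (by linarith)) hbd₁
    have e2 : ∀ᶠ t in atTop, r₂ t < ε + δ / 2 :=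
      eventually_lt_of_limsup_lt (lt_of_le_of_lt h2 (by linarith)) hbd₂
    have e3 : ∀ᶠ t in atTop, v - 2 * ε - δ ≤ f₁ t := by
      filter_upwards [e1, e2, eventually_ge_atTop 1] with t ha1 ha2 ht
      have := key1 t ht; linarith
    have := le_liminf_of_le
      (IsBoundedUnder.isCoboundedUnder_ge (isBoundedUnder_of ⟨1, hf₁ub⟩)) e3
    linarith
  · refine le_of_forall_pos_le_add fun δ hδ => ?_
    have e1 : ∀ᶠ t in atTop, r₁ t < ε + δ / 2 :=
      eventually_lt_of_limsup_lt (lt_of_le_of_lt h1 (by linarith)) hbd₁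
    have e2 : ∀ᶠ t in atTop, r₂ t < ε + δ / 2 :=
      eventually_lt_of_limsup_lt (lt_of_le_of_lt h2 (by linarith)) hbd₂
    have e3 : ∀ᶠ t in atTop, f₂ t ≤ v + 2 * ε + δ := by
      filter_upwards [e1, e2, eventually_ge_atTop 1] with t ha1 ha2 ht
      have := key2 t ht; linarith
    exact limsup_le_of_le
      (IsBoundedUnder.isCoboundedUnder_le (isBoundedUnder_of (r := (· ≥ ·)) ⟨0, hf₂lb⟩)) e3
end

section
/- Let ε ≥ 0 and let v be a value of the matrix game certified by optimal strategies. Suppose the action sequences i : ℕ → A and j : ℕ → B satisfy limsup_{t→∞} r₁(t) ≤ ε and limsup_{t→∞} r₂(t) ≤ ε. Then for every η > 0 there exists t₀ such that for all t ≥ t₀ the empirical frequency profile (σ̂₁(t), σ̂₂(t)) is a (4ε+η)-Nash equilibrium of the matrix game, i.e. u(br, σ̂₂(t)) − u(σ̂₁(t), σ̂₂(t)) ≤ 4ε + η and u(σ̂₁(t), σ̂₂(t)) − u(σ̂₁(t), br) ≤ 4ε + η. (This is the base case D = 1, i.e. the matrix-game case, of Theorem 3 on convergence of SM-MCTS-A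 with an ε-Hannan consistent selection function to a (2D(D+1)ε+η)-equilibrium, since 2·1·(1+1)ε = 4ε.) -/
/-!
Against empirical frequencies, the payoff of a pure action is its time-averaged payoff along the
play. Hence the best-response payoff of player 1 against `σ̂₂(t)` minus that of player 2 against
`σ̂₁(t)` is exactly `r₁(t) + r₂(t)`, and the payoff of the profile `(σ̂₁(t), σ̂₂(t))` lies between
the two. So each player's gain from deviating is at most `r₁(t) + r₂(t)`, which is eventually
below `2ε + η`.
-/

open Finset Filter

namespace Finset

lemma inf'_div₀ {ι G₀ : Type*} [GroupWithZero G₀] [SemilatticeInf G₀] [MulPosReflectLT G₀]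
    {a : G₀} (ha : 0 ≤ a) (f : ι → G₀) (s : Finset ι) (hs : s.Nonempty) :
    s.inf' hs f / a = s.inf' hs fun i ↦ f i / a := by
  rcases ha.eq_or_lt with rfl | ha
  · simp
  exact map_finset_inf' (OrderIso.divRight₀ a ha) hs f

lemma sum_Icc_div_le_one {f : ℕ → ℝ} (hf : ∀ s, f s ≤ 1) (t : ℕ) :
    (∑ s ∈ Icc 1 t, f s) / t ≤ 1 :=
  div_le_one_of_le₀ ((sum_le_card_nsmul _ _ 1 fun s _ ↦ hf s).trans (by simp)) t.cast_nonneg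

end Finset

section EmpiricalFrequency

variable {α : Type*} [DecidableEq α]

noncomputable def empiricalFreq (s : ℕ → α) (t : ℕ) (x : α) : ℝ :=
  ((Icc 1 t).filter (fun n ↦ s n = x)).card / t

lemma empiricalFreq_nonneg (s : ℕ → α) (t : ℕ) (x : α) : 0 ≤ empiricalFreq s t x := by
  unfold empiricalFreq; positivity

variable [Fintype α]

lemma sum_empiricalFreq_mul (s : ℕ → α) (t : ℕ) (c : α → ℝ) :
    ∑ x, empiricalFreq s t x * c x = (∑ n ∈ Icc 1 t, c (s n)) / t := by
  simp only [empiricalFreq, div_mul_eq_mul_div, ← sum_div]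
  rw [← sum_fiberwise (Icc 1 t) s (fun n ↦ c (s n))]
  congr 1
  refine sum_congr rfl fun x _ ↦ ?_
  rw [sum_congr rfl fun n hn ↦ by rw [(mem_filter.1 hn).2], sum_const, nsmul_eq_mul]

lemma sum_empiricalFreq (s : ℕ → α) {t : ℕ} (ht : t ≠ 0) : ∑ x, empiricalFreq s t x = 1 := by
  simpa [ht] using sum_empiricalFreq_mul s t 1

end EmpiricalFrequency

section MixedStrategy

variable {A B : Type*} [Fintype A] [Fintype B]

lemma sum_sum_mul_le_sup' [Nonempty A] (a : A → B → ℝ) {p : A → ℝ} (hp0 : ∀ i, 0 ≤ p i)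
    (hp1 : ∑ i, p i = 1) (q : B → ℝ) :
    ∑ i, ∑ j, p i * q j * a i j ≤ univ.sup' univ_nonempty fun i ↦ ∑ j, q j * a i j :=
  calc ∑ i, ∑ j, p i * q j * a i j = ∑ i, p i * ∑ j, q j * a i j := by
        simp only [mul_sum, mul_assoc]
    _ ≤ ∑ i, p i * univ.sup' univ_nonempty fun i ↦ ∑ j, q j * a i j :=
        sum_le_sum fun i _ ↦
          mul_le_mul_of_nonneg_left (le_sup' (fun i ↦ ∑ j, q j * a i j) (mem_univ i)) (hp0 i)
    _ = _ := by rw [← sum_mul, hp1, one_mul]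

lemma inf'_le_sum_sum_mul [Nonempty B] (a : A → B → ℝ) (p : A → ℝ) {q : B → ℝ} (hq0 : ∀ j, 0 ≤ q j)
    (hq1 : ∑ j, q j = 1) :
    (univ.inf' univ_nonempty fun j ↦ ∑ i, p i * a i j) ≤ ∑ i, ∑ j, p i * q j * a i j :=
  calc (univ.inf' univ_nonempty fun j ↦ ∑ i, p i * a i j)
      = ∑ j, q j * univ.inf' univ_nonempty fun j ↦ ∑ i, p i * a i j := by
        rw [← sum_mul, hq1, one_mul]
    _ ≤ ∑ j, q j * ∑ i, p i * a i j :=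
        sum_le_sum fun j _ ↦
          mul_le_mul_of_nonneg_left (inf'_le (fun j ↦ ∑ i, p i * a i j) (mem_univ j)) (hq0 j)
    _ = ∑ i, ∑ j, p i * q j * a i j := by
        simp only [mul_sum]
        rw [sum_comm]
        exact sum_congr rfl fun i _ ↦ sum_congr rfl fun j _ ↦ by ring

end MixedStrategy

section Regret

variable {A : Type*} [Fintype A] [Nonempty A] {f : A → ℕ → ℝ}

lemma sup'_sum_sub_sum_div_le_one (hf0 : ∀ x s, 0 ≤ f x s) (hf1 : ∀ x s, f x s ≤ 1)
    (g : ℕ → A) (t : ℕ) :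
    ((univ.sup' univ_nonempty fun x ↦ ∑ s ∈ Icc 1 t, f x s) - ∑ s ∈ Icc 1 t, f (g s) s) / t
      ≤ 1 := by
  rw [sub_div, sup'_div₀ t.cast_nonneg]
  have hbest : (univ.sup' univ_nonempty fun x ↦ (∑ s ∈ Icc 1 t, f x s) / t) ≤ 1 :=
    sup'_le _ _ fun x _ ↦ sum_Icc_div_le_one (hf1 x) t
  have hplayed : 0 ≤ (∑ s ∈ Icc 1 t, f (g s) s) / t :=
    div_nonneg (sum_nonneg fun s _ ↦ hf0 _ _) t.cast_nonneg
  linarith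

lemma sum_sub_inf'_sum_div_le_one (hf0 : ∀ x s, 0 ≤ f x s) (hf1 : ∀ x s, f x s ≤ 1)
    (g : ℕ → A) (t : ℕ) :
    ((∑ s ∈ Icc 1 t, f (g s) s) - univ.inf' univ_nonempty fun x ↦ ∑ s ∈ Icc 1 t, f x s) / t
      ≤ 1 := by
  rw [sub_div, inf'_div₀ t.cast_nonneg]
  have hplayed : (∑ s ∈ Icc 1 t, f (g s) s) / t ≤ 1 := sum_Icc_div_le_one (fun s ↦ hf1 _ _) t
  have hbest : 0 ≤ univ.inf' univ_nonempty fun x ↦ (∑ s ∈ Icc 1 t, f x s) / t :=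
    le_inf' _ _ fun x _ ↦ div_nonneg (sum_nonneg fun s _ ↦ hf0 _ _) t.cast_nonneg
  linarith

end Regret

theorem stmt_2_general {A B : Type*} [Fintype A] [Fintype B] [Nonempty A] [Nonempty B]
    [DecidableEq A] [DecidableEq B]
    (a : A → B → ℝ) (ha : ∀ i j, a i j ∈ Set.Icc (0 : ℝ) 1)
    (ε : ℝ) (hε : 0 ≤ ε)
    (i : ℕ → A) (j : ℕ → B)
    (r₁ r₂ : ℕ → ℝ)
    (hr₁ : ∀ t, r₁ t =
      ((univ.sup' univ_nonempty fun i₀ => ∑ s ∈ Finset.Icc 1 t, a i₀ (j s))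
        - ∑ s ∈ Finset.Icc 1 t, a (i s) (j s)) / t)
    (hr₂ : ∀ t, r₂ t =
      ((∑ s ∈ Finset.Icc 1 t, a (i s) (j s))
        - univ.inf' univ_nonempty fun j₀ => ∑ s ∈ Finset.Icc 1 t, a (i s) j₀) / t)
    (h1 : limsup r₁ atTop ≤ ε)
    (h2 : limsup r₂ atTop ≤ ε)
    (σ₁ : ℕ → A → ℝ) (σ₂ : ℕ → B → ℝ)
    (hσ₁ : ∀ t i₀, σ₁ t i₀ = (((Finset.Icc 1 t).filter (fun s => i s = i₀)).card : ℝ) / t)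
    (hσ₂ : ∀ t j₀, σ₂ t j₀ = (((Finset.Icc 1 t).filter (fun s => j s = j₀)).card : ℝ) / t) :
    ∀ η > (0 : ℝ), ∃ t₀ : ℕ, ∀ t ≥ t₀,
      (univ.sup' univ_nonempty fun i₀ => ∑ j₀, σ₂ t j₀ * a i₀ j₀)
          - (∑ i₀, ∑ j₀, σ₁ t i₀ * σ₂ t j₀ * a i₀ j₀) ≤ 4 * ε + η ∧
      (∑ i₀, ∑ j₀, σ₁ t i₀ * σ₂ t j₀ * a i₀ j₀)
          - (univ.inf' univ_nonempty fun j₀ => ∑ i₀, σ₁ t i₀ * a i₀ j₀) ≤ 4 * ε + η := by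
  intro η hη
  obtain rfl : σ₁ = empiricalFreq i := funext₂ hσ₁
  obtain rfl : σ₂ = empiricalFreq j := funext₂ hσ₂
  have hgap : ∀ t, (univ.sup' univ_nonempty fun i₀ => ∑ j₀, empiricalFreq j t j₀ * a i₀ j₀)
      - (univ.inf' univ_nonempty fun j₀ => ∑ i₀, empiricalFreq i t i₀ * a i₀ j₀)
      = r₁ t + r₂ t := by
    intro t
    rw [hr₁, hr₂, sub_div, sub_div, sup'_div₀ t.cast_nonneg, inf'_div₀ t.cast_nonneg]
    simp only [sum_empiricalFreq_mul]
    ring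
  -- `limsup` of a sequence unbounded above is junk; payoffs in `[0, 1]` keep the regrets `≤ 1`.
  have hr₁_lt : ∀ᶠ t in atTop, r₁ t < ε + η / 2 :=
    eventually_lt_of_limsup_lt (by linarith) <| isBoundedUnder_of ⟨1, fun t ↦ (hr₁ t).trans_le <|
      sup'_sum_sub_sum_div_le_one (fun x s ↦ (ha x (j s)).1) (fun x s ↦ (ha x (j s)).2) i t⟩
  have hr₂_lt : ∀ᶠ t in atTop, r₂ t < ε + η / 2 :=
    eventually_lt_of_limsup_lt (by linarith) <| isBoundedUnder_of ⟨1, fun t ↦ (hr₂ t).trans_le <|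
      sum_sub_inf'_sum_div_le_one (fun x s ↦ (ha (i s) x).1) (fun x s ↦ (ha (i s) x).2) j t⟩
  obtain ⟨t₀, ht₀⟩ := eventually_atTop.1 ((hr₁_lt.and hr₂_lt).and (eventually_ge_atTop 1))
  refine ⟨t₀, fun t ht ↦ ?_⟩
  obtain ⟨⟨hr₁t, hr₂t⟩, ht1⟩ := ht₀ t ht
  have hU_le := sum_sum_mul_le_sup' a (empiricalFreq_nonneg i t)
    (sum_empiricalFreq i (by omega)) (empiricalFreq j t)
  have hU_ge := inf'_le_sum_sum_mul a (empiricalFreq i t) (empiricalFreq_nonneg j t)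
    (sum_empiricalFreq j (by omega))
  constructor <;> linarith [hgap t]

/-- **Theorem 3, base case D = 1 (matrix games).**  If both players' average regrets have
`limsup ≤ ε` in a matrix game with value `v`, then for every `η > 0` there is `t₀` such
that for all `t ≥ t₀` the empirical frequency profile `(σ̂₁(t), σ̂₂(t))` is a
`(4ε + η)`-Nash equilibrium of the matrix game. -/
theorem stmt_2 {A B : Type*} [Fintype A] [Fintype B] [Nonempty A] [Nonempty B]
    [DecidableEq A] [DecidableEq B]
    (a : A → B → ℝ) (ha : ∀ i j, a i j ∈ Set.Icc (0 : ℝ) 1)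
    (ε : ℝ) (hε : 0 ≤ ε) (v : ℝ)
    (pstar : A → ℝ) (hp0 : ∀ i, 0 ≤ pstar i) (hp1 : ∑ i, pstar i = 1)
    (qstar : B → ℝ) (hq0 : ∀ j, 0 ≤ qstar j) (hq1 : ∑ j, qstar j = 1)
    (hpv : ∀ j, v ≤ ∑ i, pstar i * a i j)
    (hqv : ∀ i, ∑ j, qstar j * a i j ≤ v)
    (i : ℕ → A) (j : ℕ → B)
    (r₁ r₂ : ℕ → ℝ)
    (hr₁ : ∀ t, r₁ t =
      ((univ.sup' univ_nonempty fun i₀ => ∑ s ∈ Finset.Icc 1 t, a i₀ (j s))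
        - ∑ s ∈ Finset.Icc 1 t, a (i s) (j s)) / t)
    (hr₂ : ∀ t, r₂ t =
      ((∑ s ∈ Finset.Icc 1 t, a (i s) (j s))
        - univ.inf' univ_nonempty fun j₀ => ∑ s ∈ Finset.Icc 1 t, a (i s) j₀) / t)
    (h1 : limsup r₁ atTop ≤ ε)
    (h2 : limsup r₂ atTop ≤ ε)
    (σ₁ : ℕ → A → ℝ) (σ₂ : ℕ → B → ℝ)
    (hσ₁ : ∀ t i₀, σ₁ t i₀ = (((Finset.Icc 1 t).filter (fun s => i s = i₀)).card : ℝ) / t)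
    (hσ₂ : ∀ t j₀, σ₂ t j₀ = (((Finset.Icc 1 t).filter (fun s => j s = j₀)).card : ℝ) / t) :
    ∀ η > (0 : ℝ), ∃ t₀ : ℕ, ∀ t ≥ t₀,
      (univ.sup' univ_nonempty fun i₀ => ∑ j₀, σ₂ t j₀ * a i₀ j₀)
          - (∑ i₀, ∑ j₀, σ₁ t i₀ * σ₂ t j₀ * a i₀ j₀) ≤ 4 * ε + η ∧
      (∑ i₀, ∑ j₀, σ₁ t i₀ * σ₂ t j₀ * a i₀ j₀)
          - (univ.inf' univ_nonempty fun j₀ => ∑ i₀, σ₁ t i₀ * a i₀ j₀) ≤ 4 * ε + η :=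
  stmt_2_general a ha ε hε i j r₁ r₂ hr₁ hr₂ h1 h2 σ₁ σ₂ hσ₁ hσ₂
end

section
/- Let ε ≥ 0, c ≥ 0, let v be a value of the matrix game certified by optimal strategies, and let â be observed payoffs making (i, j, â) a repeated game with error cε. If limsup_{t→∞} r̂₁(t) ≤ ε and limsup_{t→∞} r̂₂(t) ≤ ε, then v − (c+1)ε ≤ liminf_{t→∞} ĝ(t) and limsup_{t→∞} ĝ(t) ≤ v + (c+1)ε. (Proposition 6, inequalities (6).) -/
/-!
Write `S(t)` for the realised cumulative observed payoff, so `ĝ(t) = S(t)/t`,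
`ĝ(t) = (max_{i₀} Σ â s i₀ (j s))/t - r̂₁(t)` and `ĝ(t) = r̂₂(t) + (min_{j₀} Σ â s (i s) j₀)/t`.
Playing the optimal mixed strategy `p*` against the observed `j s` earns at least `v - cε` per
step once `â` is `cε`-accurate, and the best fixed action in hindsight earns at least that much;
so `max_{i₀} Σ ≥ t (v - cε) - K` for a constant `K` paying for the inaccurate early steps.
Dividing by `t` and using `limsup r̂₁ ≤ ε` gives the lower bound; `q*` gives the upper bound
symmetrically.
-/

open Finset Filter Topology

section LimsupBounds

variable {ι : Type*} {F : Filter ι} {u w z : ι → ℝ} {b c : ℝ}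

theorem limsup_le_of_le_add_of_tendsto_zero (hu : IsCoboundedUnder (· ≤ ·) F u)
    (hw : IsBoundedUnder (· ≤ ·) F w) (hwb : limsup w F ≤ b) (hz : Tendsto z F (𝓝 0))
    (h : ∀ᶠ x in F, u x ≤ w x + c + z x) : limsup u F ≤ b + c := by
  refine le_of_forall_pos_le_add fun δ hδ => limsup_le_of_le hu ?_
  filter_upwards [eventually_lt_of_limsup_lt (hwb.trans_lt (lt_add_of_pos_right b (half_pos hδ)))
    hw, hz.eventually (gt_mem_nhds (half_pos hδ)), h] with x hwx hzx hux
  linarith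

theorem le_liminf_of_sub_le_of_tendsto_zero (hu : IsCoboundedUnder (· ≥ ·) F u)
    (hw : IsBoundedUnder (· ≤ ·) F w) (hwb : limsup w F ≤ b) (hz : Tendsto z F (𝓝 0))
    (h : ∀ᶠ x in F, c - w x - z x ≤ u x) : c - b ≤ liminf u F := by
  refine le_of_forall_pos_le_add fun δ hδ => ?_
  have : c - b - δ ≤ liminf u F := by
    refine le_liminf_of_le hu ?_
    filter_upwards
      [eventually_lt_of_limsup_lt (hwb.trans_lt (lt_add_of_pos_right b (half_pos hδ))) hw,
      hz.eventually (gt_mem_nhds (half_pos hδ)), h] with x hwx hzx hux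
    linarith
  linarith

end LimsupBounds

section PartialSums

theorem sum_Icc_mem_Icc {x : ℕ → ℝ} (hx : ∀ s, x s ∈ Set.Icc (0 : ℝ) 1) (t : ℕ) :
    ∑ s ∈ Icc 1 t, x s ∈ Set.Icc (0 : ℝ) t := by
  refine ⟨sum_nonneg fun s _ => (hx s).1, ?_⟩
  calc ∑ s ∈ Icc 1 t, x s ≤ ∑ s ∈ Icc 1 t, (1 : ℝ) := sum_le_sum fun s _ => (hx s).2
    _ = t := by simp

theorem isBoundedUnder_le_div_natCast {X : ℕ → ℝ} (h : ∀ t, X t ≤ t) :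
    IsBoundedUnder (· ≤ ·) atTop fun t => X t / t :=
  isBoundedUnder_of ⟨1, fun t => div_le_one_of_le₀ (h t) t.cast_nonneg⟩

theorem exists_mul_sub_le_sum_Icc {x : ℕ → ℝ} {L : ℝ} (h : ∀ᶠ s in atTop, L ≤ x s) :
    ∃ K, ∀ t : ℕ, t * L - K ≤ ∑ s ∈ Icc 1 t, x s := by
  obtain ⟨t₀, ht₀⟩ := eventually_atTop.1 h
  refine ⟨∑ s ∈ range t₀, |x s - L|, fun t => ?_⟩
  have hdefect : ∀ s, -(if s < t₀ then |x s - L| else 0) ≤ x s - L := fun s => by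
    split_ifs with hs
    · exact neg_abs_le _
    · linarith [ht₀ s (not_lt.1 hs)]
  have hearly :
      ∑ s ∈ Icc 1 t, (if s < t₀ then |x s - L| else 0) ≤ ∑ s ∈ range t₀, |x s - L| := by
    rw [← sum_filter]
    exact sum_le_sum_of_subset_of_nonneg (fun s hs => mem_range.2 (mem_filter.1 hs).2)
      fun s _ _ => abs_nonneg _
  have := sum_le_sum fun s (_ : s ∈ Icc 1 t) => hdefect s
  simp only [sum_neg_distrib, sum_sub_distrib, sum_const, Nat.card_Icc, add_tsub_cancel_right,
    nsmul_eq_mul] at this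
  linarith

theorem exists_sum_Icc_le_mul_add {x : ℕ → ℝ} {L : ℝ} (h : ∀ᶠ s in atTop, x s ≤ L) :
    ∃ K, ∀ t : ℕ, ∑ s ∈ Icc 1 t, x s ≤ t * L + K := by
  obtain ⟨K, hK⟩ := exists_mul_sub_le_sum_Icc (x := fun s => -x s) (L := -L)
    (h.mono fun s hs => neg_le_neg hs)
  refine ⟨K, fun t => ?_⟩
  have := hK t
  rw [sum_neg_distrib] at this
  linarith

end PartialSums

section MixedStrategies

variable {ι : Type*} [Fintype ι] {p : ι → ℝ}

theorem sum_mul_sub_sum_mul_le (hp : p ∈ stdSimplex ℝ ι) {f g : ι → ℝ} {η : ℝ}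
    (h : ∀ i, f i - g i ≤ η) : ∑ i, p i * f i - ∑ i, p i * g i ≤ η :=
  calc ∑ i, p i * f i - ∑ i, p i * g i = ∑ i, p i * (f i - g i) := by
        simp only [mul_sub, sum_sub_distrib]
    _ ≤ ∑ i, p i * η := sum_le_sum fun i _ => mul_le_mul_of_nonneg_left (h i) (hp.1 i)
    _ = η := by rw [← sum_mul, hp.2, one_mul]

variable [Nonempty ι]

theorem sum_mul_le_sup' (hp : p ∈ stdSimplex ℝ ι) (f : ι → ℝ) :
    ∑ i, p i * f i ≤ univ.sup' univ_nonempty f :=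
  calc ∑ i, p i * f i ≤ ∑ i, p i * univ.sup' univ_nonempty f :=
        sum_le_sum fun i hi => mul_le_mul_of_nonneg_left (le_sup' f hi) (hp.1 i)
    _ = univ.sup' univ_nonempty f := by rw [← sum_mul, hp.2, one_mul]

theorem inf'_le_sum_mul (hp : p ∈ stdSimplex ℝ ι) (f : ι → ℝ) :
    univ.inf' univ_nonempty f ≤ ∑ i, p i * f i :=
  calc univ.inf' univ_nonempty f = ∑ i, p i * univ.inf' univ_nonempty f := by
        rw [← sum_mul, hp.2, one_mul]
    _ ≤ ∑ i, p i * f i :=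
        sum_le_sum fun i hi => mul_le_mul_of_nonneg_left (inf'_le f hi) (hp.1 i)

end MixedStrategies

section RepeatedGame

variable {A B : Type*} {a : A → B → ℝ} {ahat : ℕ → A → B → ℝ} {η : ℝ}

theorem exists_mul_sub_le_sup'_sum_Icc [Fintype A] [Nonempty A] {p : A → ℝ}
    (hp : p ∈ stdSimplex ℝ A) {v : ℝ} (hpv : ∀ j, v ≤ ∑ i, p i * a i j)
    (herr : ∀ᶠ s in atTop, ∀ i₀ j₀, |ahat s i₀ j₀ - a i₀ j₀| ≤ η) (j : ℕ → B) :
    ∃ K, ∀ t : ℕ, t * (v - η) - K ≤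
      univ.sup' univ_nonempty fun i₀ => ∑ s ∈ Icc 1 t, ahat s i₀ (j s) := by
  obtain ⟨K, hK⟩ := exists_mul_sub_le_sum_Icc (x := fun s => ∑ i, p i * ahat s i (j s))
    (L := v - η) <| herr.mono fun s hs => by
      have := sum_mul_sub_sum_mul_le hp fun i => (abs_sub_le_iff.1 (hs i (j s))).2
      linarith [hpv (j s)]
  refine ⟨K, fun t => (hK t).trans ?_⟩
  calc ∑ s ∈ Icc 1 t, ∑ i, p i * ahat s i (j s)
        = ∑ i, p i * ∑ s ∈ Icc 1 t, ahat s i (j s) := by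
        simp_rw [mul_sum]; exact sum_comm
    _ ≤ _ := sum_mul_le_sup' hp _

theorem exists_inf'_sum_Icc_le_mul_add [Fintype B] [Nonempty B] {q : B → ℝ}
    (hq : q ∈ stdSimplex ℝ B) {v : ℝ} (hqv : ∀ i, ∑ j, q j * a i j ≤ v)
    (herr : ∀ᶠ s in atTop, ∀ i₀ j₀, |ahat s i₀ j₀ - a i₀ j₀| ≤ η) (i : ℕ → A) :
    ∃ K, ∀ t : ℕ, (univ.inf' univ_nonempty fun j₀ => ∑ s ∈ Icc 1 t, ahat s (i s) j₀) ≤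
      t * (v + η) + K := by
  obtain ⟨K, hK⟩ := exists_sum_Icc_le_mul_add (x := fun s => ∑ j, q j * ahat s (i s) j)
    (L := v + η) <| herr.mono fun s hs => by
      have := sum_mul_sub_sum_mul_le hq fun j => (abs_sub_le_iff.1 (hs (i s) j)).1
      linarith [hqv (i s)]
  refine ⟨K, fun t => le_trans ?_ (hK t)⟩
  calc _ ≤ ∑ j, q j * ∑ s ∈ Icc 1 t, ahat s (i s) j := inf'_le_sum_mul hq _
    _ = ∑ s ∈ Icc 1 t, ∑ j, q j * ahat s (i s) j := by simp_rw [mul_sum]; exact sum_comm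

end RepeatedGame

theorem stmt_4_general {A B : Type*} [Fintype A] [Fintype B] [Nonempty A] [Nonempty B]
    (a : A → B → ℝ)
    (ε c : ℝ) (v : ℝ)
    (pstar : A → ℝ) (hp0 : ∀ i, 0 ≤ pstar i) (hp1 : ∑ i, pstar i = 1)
    (qstar : B → ℝ) (hq0 : ∀ j, 0 ≤ qstar j) (hq1 : ∑ j, qstar j = 1)
    (hpv : ∀ j, v ≤ ∑ i, pstar i * a i j)
    (hqv : ∀ i, ∑ j, qstar j * a i j ≤ v)
    (i : ℕ → A) (j : ℕ → B)
    (ahat : ℕ → A → B → ℝ)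
    (hahat01 : ∀ s i₀ j₀, ahat s i₀ j₀ ∈ Set.Icc (0 : ℝ) 1)
    (herr : ∃ t₀ : ℕ, ∀ s ≥ t₀, ∀ i₀ j₀, |ahat s i₀ j₀ - a i₀ j₀| ≤ c * ε)
    (ghat r₁ r₂ : ℕ → ℝ)
    (hg : ∀ t, ghat t = (∑ s ∈ Finset.Icc 1 t, ahat s (i s) (j s)) / t)
    (hr₁ : ∀ t, r₁ t =
      ((univ.sup' univ_nonempty fun i₀ => ∑ s ∈ Finset.Icc 1 t, ahat s i₀ (j s))
        - ∑ s ∈ Finset.Icc 1 t, ahat s (i s) (j s)) / t)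
    (hr₂ : ∀ t, r₂ t =
      ((∑ s ∈ Finset.Icc 1 t, ahat s (i s) (j s))
        - univ.inf' univ_nonempty fun j₀ => ∑ s ∈ Finset.Icc 1 t, ahat s (i s) j₀) / t)
    (h1 : limsup r₁ atTop ≤ ε)
    (h2 : limsup r₂ atTop ≤ ε) :
    v - (c + 1) * ε ≤ liminf ghat atTop ∧ limsup ghat atTop ≤ v + (c + 1) * ε := by
  obtain rfl : ghat = _ := funext hg
  obtain rfl : r₁ = _ := funext hr₁
  obtain rfl : r₂ = _ := funext hr₂
  have herr' := eventually_atTop.2 herr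
  obtain ⟨K₁, hK₁⟩ := exists_mul_sub_le_sup'_sum_Icc ⟨hp0, hp1⟩ hpv herr' j
  obtain ⟨K₂, hK₂⟩ := exists_inf'_sum_Icc_le_mul_add ⟨hq0, hq1⟩ hqv herr' i
  have hS t := sum_Icc_mem_Icc (fun s => hahat01 s (i s) (j s)) t
  have hsup t : (univ.sup' univ_nonempty fun i₀ => ∑ s ∈ Icc 1 t, ahat s i₀ (j s)) ≤ t :=
    sup'_le _ _ fun i₀ _ => (sum_Icc_mem_Icc (fun s => hahat01 s i₀ (j s)) t).2
  have hinf t : 0 ≤ univ.inf' univ_nonempty fun j₀ => ∑ s ∈ Icc 1 t, ahat s (i s) j₀ :=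
    le_inf' _ _ fun j₀ _ => (sum_Icc_mem_Icc (fun s => hahat01 s (i s) j₀) t).1
  have hg_bddBelow :
      IsBoundedUnder (· ≥ ·) atTop fun t : ℕ => (∑ s ∈ Icc 1 t, ahat s (i s) (j s)) / t :=
    isBoundedUnder_of ⟨0, fun t => div_nonneg (hS t).1 t.cast_nonneg⟩
  constructor
  · have := le_liminf_of_sub_le_of_tendsto_zero (c := v - c * ε)
      (isBoundedUnder_le_div_natCast fun t => (hS t).2).isCoboundedUnder_ge
      (isBoundedUnder_le_div_natCast fun t => by linarith [hsup t, (hS t).1]) h1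
      (tendsto_const_div_atTop_nhds_zero_nat K₁) <| by
        filter_upwards [eventually_gt_atTop 0] with t ht
        have ht : (0 : ℝ) < t := by exact_mod_cast ht
        field_simp
        linarith [hK₁ t]
    linarith
  · have := limsup_le_of_le_add_of_tendsto_zero (c := v + c * ε) hg_bddBelow.isCoboundedUnder_le
      (isBoundedUnder_le_div_natCast fun t => by linarith [hinf t, (hS t).2]) h2
      (tendsto_const_div_atTop_nhds_zero_nat K₂) <| by
        filter_upwards [eventually_gt_atTop 0] with t ht
        have ht : (0 : ℝ) < t := by exact_mod_cast ht
        field_simp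
        linarith [hK₂ t]
    linarith

/-- **Proposition 6, inequalities (6).**  In a repeated game with error `cε` (observed
payoffs `â` eventually within `cε` of the exact payoffs `a`), if both players' observed
average regrets have `limsup ≤ ε`, then the observed average payoff `ĝ(t)` eventually
lies in `[v − (c+1)ε, v + (c+1)ε]`, where `v` is the value of the exact matrix game. -/
theorem stmt_4 {A B : Type*} [Fintype A] [Fintype B] [Nonempty A] [Nonempty B]
    (a : A → B → ℝ) (ha : ∀ i j, a i j ∈ Set.Icc (0 : ℝ) 1)
    (ε c : ℝ) (hε : 0 ≤ ε) (hc : 0 ≤ c) (v : ℝ)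
    (pstar : A → ℝ) (hp0 : ∀ i, 0 ≤ pstar i) (hp1 : ∑ i, pstar i = 1)
    (qstar : B → ℝ) (hq0 : ∀ j, 0 ≤ qstar j) (hq1 : ∑ j, qstar j = 1)
    (hpv : ∀ j, v ≤ ∑ i, pstar i * a i j)
    (hqv : ∀ i, ∑ j, qstar j * a i j ≤ v)
    (i : ℕ → A) (j : ℕ → B)
    (ahat : ℕ → A → B → ℝ)
    (hahat01 : ∀ s i₀ j₀, ahat s i₀ j₀ ∈ Set.Icc (0 : ℝ) 1)
    (herr : ∃ t₀ : ℕ, ∀ s ≥ t₀, ∀ i₀ j₀, |ahat s i₀ j₀ - a i₀ j₀| ≤ c * ε)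
    (ghat r₁ r₂ : ℕ → ℝ)
    (hg : ∀ t, ghat t = (∑ s ∈ Finset.Icc 1 t, ahat s (i s) (j s)) / t)
    (hr₁ : ∀ t, r₁ t =
      ((univ.sup' univ_nonempty fun i₀ => ∑ s ∈ Finset.Icc 1 t, ahat s i₀ (j s))
        - ∑ s ∈ Finset.Icc 1 t, ahat s (i s) (j s)) / t)
    (hr₂ : ∀ t, r₂ t =
      ((∑ s ∈ Finset.Icc 1 t, ahat s (i s) (j s))
        - univ.inf' univ_nonempty fun j₀ => ∑ s ∈ Finset.Icc 1 t, ahat s (i s) j₀) / t)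
    (h1 : limsup r₁ atTop ≤ ε)
    (h2 : limsup r₂ atTop ≤ ε) :
    v - (c + 1) * ε ≤ liminf ghat atTop ∧ limsup ghat atTop ≤ v + (c + 1) * ε :=
  stmt_4_general a ε c v pstar hp0 hp1 qstar hq0 hq1 hpv hqv i j ahat hahat01 herr ghat r₁ r₂ hg hr₁
    hr₂ h1 h2
end

section
/- Suppose every joint action occurs infinitely often along the play, let ε ≥ 0, c ≥ 0, and let v : A → B → ℝ. Assume: (i) for all a ∈ A, b ∈ B, limsup_{m→∞} |s̄_{ab}(m) − v a b| ≤ cε; (ii) for all a ∈ A, b ∈ B, limsup_{m→∞} |s̃_{ab}(m) − s̄_{ab}(m)| ≤ ε (unbiased payoff observations along this play); (iii) the observed regret satisfies limsup_{T→∞} R(T)/T ≤ ε. Then the regret with respect to the values v satisfies limsup_{T→∞} (1/T)(max_{a∈A} ∑_{t=1}^T v a (j t) − ∑_{t=1}^T v (i t) (j t)) ≤ 2(c+1)ε; in particular the choices of player 1 are 2(c+1)ε-Hannan consistent with respect to the matrix game v. (Proposition 13.) -/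
/-!
The regret with respect to `v` is at most the sum of the counterfactual gap
`max_a ∑_t (v a (j t) - x_a(t))`, the observed regret `R(T)` and the realized gap
`∑_t (x_{i t}(t) - v (i t) (j t))`, which grow at slope at most `(c+1)ε`, `ε` and `cε` in `T`.

Realized gap: the payoffs received from the joint action `(a,b)` up to time `T` are the first
`N = N_{ab}(T)` terms of `s_{ab}`, so their gap to `N · v a b` is `N (s̄_{ab}(N) - v a b)`, which
(i) bounds by `cε N + o(N)`.

Counterfactual gap: the times at which `b` is played fall into blocks ending at the successive
occurrences of `(a,b)`; throughout the block ending at the `k`-th occurrence, action `a` observes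
`s_{ab}(k)`, and this block has exactly `w_{ab}(k)` elements (up to one for the first block). So
the counterfactual payoff of `a` against `b` is a `w`-weighted sum of `s_{ab}`, and (i) with (ii)
bound its gap by `(c+1)ε` times the number of times `b` was played, plus `o(T)`. The last,
incomplete block is handled by interpolating between two consecutive weighted partial sums.
-/

open Finset Filter

namespace HannanConsistency

/-- For `clock n = n` and `g` of at most linear growth, this is `limsup g n / n ≤ L`. -/
def SlopeLE (g clock : ℕ → ℝ) (L : ℝ) : Prop :=
  ∀ L' > L, ∃ D, ∀ n, g n ≤ L' * clock n + D

lemma exists_forall_le_add_of_eventually_le {g h : ℕ → ℝ} (hgh : ∀ᶠ n in atTop, g n ≤ h n) :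
    ∃ D, ∀ n, g n ≤ h n + D := by
  obtain ⟨N, hN⟩ := eventually_atTop.mp hgh
  have hD : 0 ≤ ∑ n ∈ range N, |g n - h n| := sum_nonneg fun n _ => abs_nonneg _
  refine ⟨∑ n ∈ range N, |g n - h n|, fun n => ?_⟩
  rcases lt_or_ge n N with hn | hn
  · have := single_le_sum (f := fun n => |g n - h n|) (fun _ _ => abs_nonneg _) (mem_range.mpr hn)
    linarith [le_abs_self (g n - h n)]
  · linarith [hN n hn]

namespace SlopeLE

variable {g h clock : ℕ → ℝ} {L M : ℝ}

lemma of_eventually (hg : ∀ L' > L, ∀ᶠ n in atTop, g n ≤ L' * clock n) : SlopeLE g clock L :=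
  fun L' hL' => exists_forall_le_add_of_eventually_le (hg L' hL')

lemma mono (hgh : ∀ n, g n ≤ h n) (hh : SlopeLE h clock L) : SlopeLE g clock L :=
  fun L' hL' => (hh L' hL').imp fun _ hD n => (hgh n).trans (hD n)

lemma comp (hg : SlopeLE g clock L) (φ : ℕ → ℕ) : SlopeLE (g ∘ φ) (clock ∘ φ) L :=
  fun L' hL' => (hg L' hL').imp fun _ hD n => hD (φ n)

lemma add (hg : SlopeLE g clock L) (hh : SlopeLE h clock M) :
    SlopeLE (fun n => g n + h n) clock (L + M) := by
  intro L' hL'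
  obtain ⟨D₁, hD₁⟩ := hg (L + (L' - L - M) / 2) (by linarith)
  obtain ⟨D₂, hD₂⟩ := hh (M + (L' - L - M) / 2) (by linarith)
  exact ⟨D₁ + D₂, fun n => by linarith [hD₁ n, hD₂ n]⟩

lemma of_abs_sub_le {g' clock' : ℕ → ℝ} {B B' : ℝ} (hg : SlopeLE g clock L)
    (hB : ∀ n, |g' n - g n| ≤ B) (hB' : ∀ n, |clock' n - clock n| ≤ B') :
    SlopeLE g' clock' L := by
  intro L' hL'
  obtain ⟨D, hD⟩ := hg L' hL'
  refine ⟨D + B + |L'| * B', fun n => ?_⟩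
  have hclock : L' * clock n ≤ L' * clock' n + |L'| * B' := by
    have := (le_abs_self (L' * (clock n - clock' n))).trans_eq (abs_mul L' _)
    nlinarith [abs_sub_comm (clock' n) (clock n), hB' n, abs_nonneg L']
  linarith [hD n, (le_abs_self (g' n - g n)).trans (hB n)]

lemma sum {ι : Type*} [Fintype ι] {g clock : ι → ℕ → ℝ} (hg : ∀ b, SlopeLE (g b) (clock b) L) :
    SlopeLE (fun n => ∑ b, g b n) (fun n => ∑ b, clock b n) L := by
  intro L' hL'
  choose D hD using fun b => hg b L' hL'
  exact ⟨∑ b, D b, fun n => by rw [mul_sum, ← sum_add_distrib]; exact sum_le_sum fun b _ => hD b n⟩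

lemma sup' {ι : Type*} [Fintype ι] [Nonempty ι] {g : ι → ℕ → ℝ} (hg : ∀ a, SlopeLE (g a) clock L) :
    SlopeLE (fun n => univ.sup' univ_nonempty fun a => g a n) clock L := by
  intro L' hL'
  choose D hD using fun a => hg a L' hL'
  refine ⟨univ.sup' univ_nonempty D, fun n => sup'_le _ _ fun a _ => ?_⟩
  exact (hD a n).trans (by gcongr; exact le_sup' D (mem_univ a))

lemma add_partial {V g : ℕ → ℝ}
    (h : SlopeLE (fun m => ∑ k ∈ range m, V k * g k) (fun m => ∑ k ∈ range m, V k) L)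
    (K : ℕ → ℕ) (r : ℕ → ℝ) (hr : ∀ n, 0 ≤ r n ∧ r n ≤ V (K n)) :
    SlopeLE (fun n => ∑ k ∈ range (K n), V k * g k + r n * g (K n))
      (fun n => ∑ k ∈ range (K n), V k + r n) L := by
  intro L' hL'
  obtain ⟨D, hD⟩ := h L' hL'
  refine ⟨D, fun n => ?_⟩
  have h₀ := hD (K n)
  have h₁ := hD (K n + 1)
  simp only [sum_range_succ] at h₁
  -- the bound is affine in the weight `r n` of the last term, and holds at `0` and at `V (K n)`
  obtain ⟨hr₀, hrV⟩ := hr n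
  rcases le_total (g (K n)) L' with hgL | hgL
  · nlinarith
  · nlinarith

lemma of_limsup_div_le {C : ℝ} (hC : ∀ n : ℕ, g n ≤ C * n)
    (hg : limsup (fun n : ℕ => g n / n) atTop ≤ L) : SlopeLE g Nat.cast L := by
  have hbdd : IsBoundedUnder (· ≤ ·) atTop fun n : ℕ => g n / n :=
    isBoundedUnder_of ⟨max C 0, fun n => div_le_of_le_mul₀ n.cast_nonneg (le_max_right _ _)
      ((hC n).trans (mul_le_mul_of_nonneg_right (le_max_left _ _) n.cast_nonneg))⟩
  refine of_eventually fun L' hL' => ?_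
  filter_upwards [eventually_lt_of_limsup_lt (hg.trans_lt hL') hbdd, eventually_gt_atTop 0]
    with n hn hn0
  exact ((div_lt_iff₀ (by positivity)).mp hn).le

lemma limsup_div_le {C : ℝ} (hC : ∀ n : ℕ, C * n ≤ g n) (hg : SlopeLE g Nat.cast L) :
    limsup (fun n : ℕ => g n / n) atTop ≤ L := by
  have hcobdd : IsCoboundedUnder (· ≤ ·) atTop fun n : ℕ => g n / n :=
    isCoboundedUnder_le_of_eventually_le atTop (x := C) <| by
      filter_upwards [eventually_gt_atTop 0] with n hn
      exact (le_div_iff₀ (by positivity)).mpr (hC n)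
  refine le_of_forall_pos_le_add fun δ hδ => limsup_le_of_le hcobdd ?_
  obtain ⟨D, hD⟩ := hg (L + δ / 2) (by linarith)
  filter_upwards [tendsto_natCast_atTop_atTop.eventually_ge_atTop (2 * D / δ),
    eventually_gt_atTop 0] with n hn hn0
  have hn' : 2 * D ≤ n * δ := (div_le_iff₀ hδ).mp hn
  rw [div_le_iff₀ (by positivity)]
  linarith [hD n]

end SlopeLE

section Occurrences

variable {p : ℕ → Prop}

variable (p) in
/-- `occ p k` is the time of the `k`-th occurrence of `p` for `k ≥ 1` (`Nat.nth` counts from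
`0`), and `occ p 0 = 0`. -/
noncomputable def occ : ℕ → ℕ
  | 0 => 0
  | k + 1 => Nat.nth p k

lemma occ_mono (hp : (Set.ofPred p).Infinite) : Monotone (occ p) := by
  refine monotone_nat_of_le_succ fun k => ?_
  cases k with
  | zero => exact Nat.zero_le _
  | succ k => exact (Nat.nth_strictMono hp k.lt_succ_self).le

lemma occ_lt_occ_succ (hp : (Set.ofPred p).Infinite) (hp0 : ¬ p 0) (k : ℕ) :
    occ p k < occ p (k + 1) := by
  cases k with
  | zero => exact Nat.pos_of_ne_zero fun h => hp0 (h ▸ Nat.nth_mem_of_infinite hp 0)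
  | succ k => exact Nat.nth_strictMono hp k.lt_succ_self

lemma count_eq_of_mem_Ioc [DecidablePred p] (hp : (Set.ofPred p).Infinite) {k t : ℕ}
    (ht : t ∈ Ioc (occ p k) (occ p (k + 1))) : Nat.count p t = k := by
  obtain ⟨hlo, hhi⟩ := mem_Ioc.mp ht
  refine le_antisymm ((Nat.count_le_iff_le_nth hp).mpr hhi) ?_
  cases k with
  | zero => exact Nat.zero_le _
  | succ k => exact (Nat.lt_nth_iff_count_lt hp).mpr hlo

lemma not_of_mem_Ioo_occ [DecidablePred p] (hp : (Set.ofPred p).Infinite) {k t : ℕ}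
    (ht : t ∈ Ioo (occ p k) (occ p (k + 1))) : ¬ p t := fun hpt => by
  have h := Nat.nth_count hpt
  rw [count_eq_of_mem_Ioc hp (Ioo_subset_Ioc_self ht)] at h
  exact (mem_Ioo.mp ht).2.ne h.symm

lemma occ_count_succ_le [DecidablePred p] (hp : (Set.ofPred p).Infinite) (T : ℕ) :
    occ p (Nat.count p (T + 1)) ≤ T := by
  cases hK : Nat.count p (T + 1) with
  | zero => exact Nat.zero_le T
  | succ K => exact Nat.lt_succ_iff.mp ((Nat.lt_nth_iff_count_lt hp).mp (hK ▸ K.lt_succ_self))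

lemma lt_occ_count_succ_add_one [DecidablePred p] (hp : (Set.ofPred p).Infinite) (T : ℕ) :
    T < occ p (Nat.count p (T + 1) + 1) :=
  (Nat.count_le_iff_le_nth hp).mp le_rfl

lemma sum_Ioc_eq_sum_range_add {M : Type*} [AddCommMonoid M] {τ : ℕ → ℕ} (hτ : Monotone τ)
    (f : ℕ → M) {K T : ℕ} (hK : τ K ≤ T) :
    ∑ t ∈ Ioc (τ 0) T, f t
      = ∑ k ∈ range K, ∑ t ∈ Ioc (τ k) (τ (k + 1)), f t + ∑ t ∈ Ioc (τ K) T, f t := by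
  induction K with
  | zero => simp
  | succ K ih =>
    rw [ih ((hτ K.le_succ).trans hK), sum_range_succ, add_assoc,
      sum_Ioc_consecutive _ (hτ K.le_succ) hK]

lemma sum_filter_Ioc_count [DecidablePred p] (hp : (Set.ofPred p).Infinite) (q : ℕ → Prop)
    [DecidablePred q] (f : ℕ → ℝ) (T : ℕ) :
    ∑ t ∈ (Ioc 0 T).filter q, f (Nat.count p t)
      = ∑ k ∈ range (Nat.count p (T + 1)), #((Ioc (occ p k) (occ p (k + 1))).filter q) * f k
        + #((Ioc (occ p (Nat.count p (T + 1))) T).filter q) * f (Nat.count p (T + 1)) := by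
  have hcell : ∀ k {s : Finset ℕ}, s ⊆ Ioc (occ p k) (occ p (k + 1)) →
      ∑ t ∈ s.filter q, f (Nat.count p t) = #(s.filter q) * f k := fun k s hs => by
    rw [← nsmul_eq_mul, ← sum_const]
    exact sum_congr rfl fun t ht => by rw [count_eq_of_mem_Ioc hp (hs (mem_filter.mp ht).1)]
  change ∑ t ∈ (Ioc (occ p 0) T).filter q, _ = _
  rw [sum_filter, sum_Ioc_eq_sum_range_add (occ_mono hp) _ (occ_count_succ_le hp T)]
  simp only [← sum_filter]
  exact congrArg₂ (· + ·) (sum_congr rfl fun k _ => hcell k subset_rfl)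
    (hcell _ (Ioc_subset_Ioc_right (lt_occ_count_succ_add_one hp T).le))

lemma sum_filter_range_count [DecidablePred p] {M : Type*} [AddCommMonoid M] (f : ℕ → M) (n : ℕ) :
    ∑ t ∈ (range n).filter p, f (Nat.count p t) = ∑ k ∈ range (Nat.count p n), f k := by
  induction n with
  | zero => simp
  | succ n ih =>
    rw [range_add_one, filter_insert, Nat.count_succ]
    by_cases hn : p n
    · rw [if_pos hn, if_pos hn, sum_insert (by simp), ih, sum_range_succ, add_comm]
    · rw [if_neg hn, if_neg hn, ih, add_zero]

end Occurrences

section Averages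

lemma weighted_mean_mem_Icc {ι : Type*} {s : Finset ι} {w f : ι → ℝ} (hw : ∀ k ∈ s, 0 ≤ w k)
    (hf : ∀ k ∈ s, f k ∈ Set.Icc (0 : ℝ) 1) :
    (∑ k ∈ s, w k * f k) / ∑ k ∈ s, w k ∈ Set.Icc (0 : ℝ) 1 :=
  ⟨div_nonneg (sum_nonneg fun k hk => mul_nonneg (hw k hk) (hf k hk).1) (sum_nonneg hw),
    div_le_one_of_le₀ (sum_le_sum fun k hk => mul_le_of_le_one_right (hw k hk) (hf k hk).2)
      (sum_nonneg hw)⟩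

lemma mean_mem_Icc {s : ℕ → ℝ} (hs : ∀ k, 1 ≤ k → s k ∈ Set.Icc (0 : ℝ) 1) (m : ℕ) :
    (∑ k ∈ Icc 1 m, s k) / m ∈ Set.Icc (0 : ℝ) 1 := by
  simpa using weighted_mean_mem_Icc (s := Icc 1 m) (w := fun _ => 1) (fun _ _ => zero_le_one)
    fun k hk => hs k (mem_Icc.mp hk).1

lemma sum_Icc_one_eq_sum_range {M : Type*} [AddCommMonoid M] (f : ℕ → M) (m : ℕ) :
    ∑ k ∈ Icc 1 m, f k = ∑ k ∈ range m, f (k + 1) := by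
  rw [← Ico_add_one_right_eq_Icc, sum_Ico_eq_sum_range]
  simp [add_comm]

lemma slopeLE_abs_sub_mul {num den : ℕ → ℝ} {v L : ℝ} (hden : ∀ᶠ m in atTop, 0 < den m)
    (h : ∀ L' > L, ∀ᶠ m in atTop, |num m / den m - v| < L') :
    SlopeLE (fun m => |num m - v * den m|) den L :=
  SlopeLE.of_eventually fun L' hL' => by
    filter_upwards [hden, h L' hL'] with m hm hlt
    have : num m - v * den m = (num m / den m - v) * den m := by field_simp
    rw [this, abs_mul, abs_of_pos hm]
    exact mul_le_mul_of_nonneg_right hlt.le hm.le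

lemma slopeLE_sum_sub_of_limsup {s sbar : ℕ → ℝ} {v L : ℝ}
    (hs : ∀ k, 1 ≤ k → s k ∈ Set.Icc (0 : ℝ) 1) (hsbar : ∀ m, sbar m = (∑ k ∈ Icc 1 m, s k) / m)
    (h : limsup (fun m => |sbar m - v|) atTop ≤ L) :
    SlopeLE (fun m => ∑ k ∈ Icc 1 m, (s k - v)) Nat.cast L := by
  have hbdd : IsBoundedUnder (· ≤ ·) atTop fun m => |sbar m - v| := by
    refine isBoundedUnder_of ⟨1 + |v|, fun m => (abs_sub _ _).trans ?_⟩
    have := mean_mem_Icc hs m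
    rw [← hsbar] at this
    linarith [abs_of_nonneg this.1, this.2]
  refine (slopeLE_abs_sub_mul (num := fun m => ∑ k ∈ Icc 1 m, s k) (v := v)
    (tendsto_natCast_atTop_atTop.eventually_gt_atTop 0) fun L' hL' => ?_).mono fun m => ?_
  · simpa only [← hsbar] using eventually_lt_of_limsup_lt (h.trans_lt hL') hbdd
  · simp [sum_sub_distrib, le_abs_self, mul_comm]

lemma slopeLE_weighted_of_limsup {s w sbar stil : ℕ → ℝ} {v L₁ L₂ : ℝ}
    (hs : ∀ k, 1 ≤ k → s k ∈ Set.Icc (0 : ℝ) 1) (hw : ∀ k, 1 ≤ k → 1 ≤ w k)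
    (hsbar : ∀ m, sbar m = (∑ k ∈ Icc 1 m, s k) / m)
    (hstil : ∀ m, stil m = (∑ k ∈ Icc 1 m, w k * s k) / ∑ k ∈ Icc 1 m, w k)
    (h₁ : limsup (fun m => |sbar m - v|) atTop ≤ L₁)
    (h₂ : limsup (fun m => |stil m - sbar m|) atTop ≤ L₂) :
    SlopeLE (fun m => ∑ k ∈ Icc 1 m, w k * (v - s k)) (fun m => ∑ k ∈ Icc 1 m, w k) (L₁ + L₂) := by
  have hsbar01 : ∀ m, sbar m ∈ Set.Icc (0 : ℝ) 1 := fun m => hsbar m ▸ mean_mem_Icc hs m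
  have hstil01 : ∀ m, stil m ∈ Set.Icc (0 : ℝ) 1 := fun m => hstil m ▸ weighted_mean_mem_Icc
    (fun k hk => zero_le_one.trans (hw k (mem_Icc.mp hk).1)) fun k hk => hs k (mem_Icc.mp hk).1
  have hbdd₁ : IsBoundedUnder (· ≤ ·) atTop fun m => |sbar m - v| :=
    isBoundedUnder_of ⟨1 + |v|, fun m => (abs_sub _ _).trans (by
      linarith [abs_of_nonneg (hsbar01 m).1, (hsbar01 m).2])⟩
  have hbdd₂ : IsBoundedUnder (· ≤ ·) atTop fun m => |stil m - sbar m| :=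
    isBoundedUnder_of ⟨1, fun m => abs_sub_le_of_nonneg_of_le (hstil01 m).1 (hstil01 m).2
      (hsbar01 m).1 (hsbar01 m).2⟩
  have hden : ∀ᶠ m in atTop, 0 < ∑ k ∈ Icc 1 m, w k := by
    filter_upwards [eventually_gt_atTop 0] with m hm
    exact sum_pos (fun k hk => zero_lt_one.trans_le (hw k (mem_Icc.mp hk).1)) (nonempty_Icc.mpr hm)
  refine (slopeLE_abs_sub_mul (num := fun m => ∑ k ∈ Icc 1 m, w k * s k) (v := v) hden
    fun L' hL' => ?_).mono fun m => ?_
  · have hd : 0 < (L' - L₁ - L₂) / 2 := by linarith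
    filter_upwards [eventually_lt_of_limsup_lt (h₁.trans_lt (lt_add_of_pos_right L₁ hd)) hbdd₁,
      eventually_lt_of_limsup_lt (h₂.trans_lt (lt_add_of_pos_right L₂ hd)) hbdd₂] with m hm₁ hm₂
    rw [← hstil]
    calc |stil m - v| ≤ |stil m - sbar m| + |sbar m - v| := abs_sub_le _ _ _
      _ < L' := by linarith
  · simp only [mul_sub, sum_sub_distrib, ← sum_mul]
    rw [abs_sub_comm, mul_comm]
    exact le_abs_self _

end Averages

lemma abs_sum_range_mul_le {d h : ℕ → ℝ} (hd : ∀ k, k ≠ 0 → d k = 0) (hd0 : |d 0| ≤ 1)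
    (m : ℕ) : |∑ k ∈ range m, d k * h k| ≤ |h 0| := by
  cases m with
  | zero => simp
  | succ m =>
    rw [sum_range_succ', sum_eq_zero fun k _ => by rw [hd (k + 1) k.succ_ne_zero, zero_mul],
      zero_add, abs_mul]
    exact mul_le_of_le_one_left (abs_nonneg _) hd0

section Play

variable {A B : Type*} [DecidableEq A] [DecidableEq B] (i : ℕ → A) (j : ℕ → B)

def plays (a : A) (b : B) (t : ℕ) : Prop := 1 ≤ t ∧ i t = a ∧ j t = b

instance (a : A) (b : B) : DecidablePred (plays i j a b) :=
  fun t => inferInstanceAs (Decidable (1 ≤ t ∧ i t = a ∧ j t = b))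

lemma count_plays (a : A) (b : B) (t : ℕ) :
    Nat.count (plays i j a b) t = #((Icc 1 (t - 1)).filter fun u => i u = a ∧ j u = b) := by
  rw [Nat.count_eq_card_filter_range]
  refine congrArg card (Finset.ext fun u => ?_)
  rw [mem_filter, mem_filter, mem_range, mem_Icc]
  exact ⟨fun ⟨h₁, h₂, h₃⟩ => ⟨⟨h₂, by omega⟩, h₃⟩, fun ⟨⟨h₁, h₂⟩, h₃⟩ => ⟨by omega, h₁, h₃⟩⟩

/-- The times at which `b` is played in the block `(occ k, occ (k + 1)]` are those counted by
the weight `w_{ab}(k + 1)`, except that `w_{ab}(1)` may also count the time `0`. -/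
lemma one_add_card_filter_Icc_occ (a : A) (b : B) (hp : (Set.ofPred (plays i j a b)).Infinite)
    (k : ℕ) :
    1 + #((Icc (occ (plays i j a b) k) (occ (plays i j a b) (k + 1))).filter
        fun u => j u = b ∧ i u ≠ a)
      = #((Ioc (occ (plays i j a b) k) (occ (plays i j a b) (k + 1))).filter fun u => j u = b)
        + if k = 0 ∧ j 0 = b ∧ i 0 ≠ a then 1 else 0 := by
  set p := plays i j a b
  have hLR := occ_lt_occ_succ hp (fun h => by simp [p, plays] at h) k
  have hR : p (occ p (k + 1)) := Nat.nth_mem_of_infinite hp k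
  have hL : k ≠ 0 → p (occ p k) := fun hk => by
    obtain ⟨k, rfl⟩ := Nat.exists_eq_succ_of_ne_zero hk
    exact Nat.nth_mem_of_infinite hp k
  have hQL : (j (occ p k) = b ∧ i (occ p k) ≠ a) ↔ (k = 0 ∧ j 0 = b ∧ i 0 ≠ a) := by
    rcases Nat.eq_zero_or_pos k with rfl | hk
    · simp [occ]
    · simp only [hk.ne', false_and, iff_false, not_and, not_not]
      exact fun _ => (hL hk.ne').2.1
  have hIoo : ∑ u ∈ Ioo (occ p k) (occ p (k + 1)), (if j u = b ∧ i u ≠ a then 1 else 0)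
      = ∑ u ∈ Ioo (occ p k) (occ p (k + 1)), if j u = b then 1 else 0 :=
    sum_congr rfl fun u hu => if_congr ⟨And.left, fun hj => ⟨hj, fun hi =>
      not_of_mem_Ioo_occ hp hu ⟨by have := (mem_Ioo.mp hu).1; omega, hi, hj⟩⟩⟩ rfl rfl
  rw [← Ioc_insert_left hLR.le, ← Ioo_insert_right hLR, card_filter, card_filter,
    sum_insert (by simp [hLR.ne]), sum_insert (by simp), sum_insert (by simp), hIoo,
    if_congr hQL rfl rfl]
  simp only [ne_eq, hR.2.2, hR.2.1, not_true_eq_false, and_false, ↓reduceIte, sum_boole,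
    Nat.cast_id, zero_add]
  ring

lemma slopeLE_sum_filter_count (a : A) (b : B) (hp : (Set.ofPred (plays i j a b)).Infinite)
    {w g : ℕ → ℝ} {L : ℝ}
    (hw : ∀ k, w (k + 1) = 1 + #((Icc (occ (plays i j a b) k) (occ (plays i j a b) (k + 1))).filter
      fun u => j u = b ∧ i u ≠ a))
    (hg : SlopeLE (fun m => ∑ k ∈ range m, w (k + 1) * g k) (fun m => ∑ k ∈ range m, w (k + 1)) L) :
    SlopeLE (fun T => ∑ t ∈ (Ioc 0 T).filter (j · = b), g (Nat.count (plays i j a b) t))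
      (fun T => #((Ioc 0 T).filter (j · = b))) L := by
  set p := plays i j a b
  set V : ℕ → ℝ := fun k => #((Ioc (occ p k) (occ p (k + 1))).filter (j · = b))
  have hVw : ∀ k, V k - w (k + 1) = -(if k = 0 ∧ j 0 = b ∧ i 0 ≠ a then 1 else 0) := fun k => by
    have := congrArg (Nat.cast : ℕ → ℝ) (one_add_card_filter_Icc_occ i j a b hp k)
    push_cast at this
    rw [hw k]
    linarith
  have hd : ∀ k, k ≠ 0 → V k - w (k + 1) = 0 := fun k hk => by simp [hVw, hk]
  have hd0 : |V 0 - w (0 + 1)| ≤ 1 := by rw [hVw]; split_ifs <;> simp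
  have hcells : SlopeLE (fun m => ∑ k ∈ range m, V k * g k) (fun m => ∑ k ∈ range m, V k) L :=
    hg.of_abs_sub_le
      (fun m => by simpa only [← sum_sub_distrib, ← sub_mul] using abs_sum_range_mul_le hd hd0 m)
      (fun m => by simpa [← sum_sub_distrib] using abs_sum_range_mul_le (h := 1) hd hd0 m)
  have hlast : ∀ T, (0 : ℝ) ≤ #((Ioc (occ p (Nat.count p (T + 1))) T).filter (j · = b)) ∧
      (#((Ioc (occ p (Nat.count p (T + 1))) T).filter (j · = b)) : ℝ) ≤ V (Nat.count p (T + 1)) :=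
    fun T => ⟨Nat.cast_nonneg _, Nat.cast_le.mpr (card_le_card (filter_subset_filter _
      (Ioc_subset_Ioc_right (lt_occ_count_succ_add_one hp T).le)))⟩
  convert hcells.add_partial _ _ hlast using 1 <;> funext T
  · exact sum_filter_Ioc_count hp _ g T
  · simpa using sum_filter_Ioc_count hp (j · = b) (fun _ => 1) T

lemma slopeLE_sum_counterfactual [Fintype B] (hinf : ∀ a b, (Set.ofPred (plays i j a b)).Infinite)
    (v : A → B → ℝ) (s w : A → B → ℕ → ℝ) {L : ℝ}
    (hw : ∀ a b k, w a b (k + 1) = 1 + #((Icc (occ (plays i j a b) k)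
      (occ (plays i j a b) (k + 1))).filter fun u => j u = b ∧ i u ≠ a))
    (hL : ∀ a b, SlopeLE (fun m => ∑ k ∈ Icc 1 m, w a b k * (v a b - s a b k))
      (fun m => ∑ k ∈ Icc 1 m, w a b k) L) (a : A) :
    SlopeLE (fun T => ∑ t ∈ Icc 1 T, (v a (j t) - s a (j t) (Nat.count (plays i j a (j t)) t + 1)))
      Nat.cast L := by
  have hfiber := fun b => slopeLE_sum_filter_count i j a b (hinf a b) (hw a b)
    (g := fun k => v a b - s a b (k + 1)) (by simpa only [sum_Icc_one_eq_sum_range] using hL a b)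
  convert SlopeLE.sum hfiber using 1 <;> funext T
  · rw [show Icc 1 T = Ioc 0 T from Icc_add_one_left_eq_Ioc 0 T, ← sum_fiberwise (Ioc 0 T) j]
    refine sum_congr rfl fun b _ => sum_congr rfl fun t ht => ?_
    rw [(mem_filter.mp ht).2]
  · rw [← Nat.cast_sum, ← card_eq_sum_card_fiberwise fun _ _ => mem_univ _, Nat.card_Ioc,
      Nat.sub_zero]

lemma sum_Icc_eq_sum_sum_range_count [Fintype A] [Fintype B] (F : A → B → ℕ → ℝ) (T : ℕ) :
    ∑ t ∈ Icc 1 T, F (i t) (j t) (Nat.count (plays i j (i t) (j t)) t)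
      = ∑ a, ∑ b, ∑ k ∈ range (Nat.count (plays i j a b) (T + 1)), F a b k := by
  rw [← sum_fiberwise (Icc 1 T) (fun t => (i t, j t)), Fintype.sum_prod_type]
  refine sum_congr rfl fun a _ => sum_congr rfl fun b _ => ?_
  have hfilter : (Icc 1 T).filter (fun t => (i t, j t) = (a, b))
      = (range (T + 1)).filter (plays i j a b) := by
    ext t
    rw [mem_filter, mem_filter, mem_Icc, mem_range, Prod.mk.injEq]
    exact ⟨fun ⟨⟨h₁, h₂⟩, h₃⟩ => ⟨by omega, h₁, h₃⟩, fun ⟨h₁, h₂, h₃⟩ => ⟨⟨h₂, by omega⟩, h₃⟩⟩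
  rw [hfilter, ← sum_filter_range_count]
  refine sum_congr rfl fun t ht => ?_
  obtain ⟨-, -, rfl, rfl⟩ := mem_filter.mp ht
  rfl

lemma slopeLE_sum_realized [Fintype A] [Fintype B] (v : A → B → ℝ) (s : A → B → ℕ → ℝ) {L : ℝ}
    (hL : ∀ a b, SlopeLE (fun m => ∑ k ∈ Icc 1 m, (s a b k - v a b)) Nat.cast L) :
    SlopeLE (fun T => ∑ t ∈ Icc 1 T,
      (s (i t) (j t) (Nat.count (plays i j (i t) (j t)) t + 1) - v (i t) (j t))) Nat.cast L := by
  have := SlopeLE.sum fun a => SlopeLE.sum fun b =>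
    (hL a b).comp fun T => Nat.count (plays i j a b) (T + 1)
  convert this using 1 <;> funext T
  · simpa [sum_Icc_one_eq_sum_range] using
      sum_Icc_eq_sum_sum_range_count i j (fun a b k => s a b (k + 1) - v a b) T
  · simpa using sum_Icc_eq_sum_sum_range_count i j (fun _ _ _ => (1 : ℝ)) T

end Play

section Regret

variable {A : Type*} [Fintype A] [Nonempty A]

def regret (y : A → ℕ → ℝ) (i : ℕ → A) (T : ℕ) : ℝ :=
  univ.sup' univ_nonempty (fun a => ∑ t ∈ Icc 1 T, y a t) - ∑ t ∈ Icc 1 T, y (i t) t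

lemma regret_le_add (y z : A → ℕ → ℝ) (i : ℕ → A) (T : ℕ) :
    regret y i T ≤ univ.sup' univ_nonempty (fun a => ∑ t ∈ Icc 1 T, (y a t - z a t))
      + regret z i T + ∑ t ∈ Icc 1 T, (z (i t) t - y (i t) t) := by
  have hsup : univ.sup' univ_nonempty (fun a => ∑ t ∈ Icc 1 T, y a t)
      ≤ univ.sup' univ_nonempty (fun a => ∑ t ∈ Icc 1 T, (y a t - z a t))
        + univ.sup' univ_nonempty (fun a => ∑ t ∈ Icc 1 T, z a t) :=
    sup'_le _ _ fun a _ => by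
      have h₁ := le_sup' (fun a => ∑ t ∈ Icc 1 T, (y a t - z a t)) (mem_univ a)
      have h₂ := le_sup' (fun a => ∑ t ∈ Icc 1 T, z a t) (mem_univ a)
      rw [sum_sub_distrib] at h₁
      linarith
  rw [regret, regret, sum_sub_distrib]
  linarith

lemma abs_regret_le (y : A → ℕ → ℝ) (i : ℕ → A) {M : ℝ} (hy : ∀ a t, |y a t| ≤ M) (T : ℕ) :
    |regret y i T| ≤ 2 * M * T := by
  have hsum : ∀ f : ℕ → ℝ, (∀ t, |f t| ≤ M) → |∑ t ∈ Icc 1 T, f t| ≤ M * T := fun f hf =>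
    (abs_sum_le_sum_abs _ _).trans ((sum_le_sum fun t _ => hf t).trans (by simp [mul_comm]))
  obtain ⟨a, -, ha⟩ := exists_mem_eq_sup' univ_nonempty fun a => ∑ t ∈ Icc 1 T, y a t
  calc |regret y i T| ≤ M * T + M * T := by
        rw [regret, ha]
        exact (abs_sub _ _).trans (add_le_add (hsum _ (hy a)) (hsum _ fun t => hy (i t) t))
    _ = 2 * M * T := by ring

end Regret

end HannanConsistency

open HannanConsistency

theorem stmt_7_general {A B : Type*} [Fintype A] [Fintype B] [Nonempty A]
    [DecidableEq A] [DecidableEq B]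
    (i : ℕ → A) (j : ℕ → B)
    (hinf : ∀ (a : A) (b : B), {t : ℕ | 1 ≤ t ∧ i t = a ∧ j t = b}.Infinite)
    (ε c : ℝ)
    (v : A → B → ℝ)
    (s : A → B → ℕ → ℝ)
    (hs : ∀ (a : A) (b : B) (m : ℕ), 1 ≤ m → s a b m ∈ Set.Icc (0 : ℝ) 1)
    -- `tstar a b m` is the time of the `m`-th occurrence of the joint action `(a,b)`,
    -- with the convention `tstar a b 0 = 0`.
    (tstar : A → B → ℕ → ℕ)
    (htstar0 : ∀ a b, tstar a b 0 = 0)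
    (htstar : ∀ (a : A) (b : B) (m : ℕ),
      tstar a b (m + 1) = Nat.nth (fun t => 1 ≤ t ∧ i t = a ∧ j t = b) m)
    -- the weights `w_{ab}(m)` for `m ≥ 1`
    (w : A → B → ℕ → ℝ)
    (hw : ∀ (a : A) (b : B) (m : ℕ), w a b (m + 1) = 1 +
      (((Finset.Icc (tstar a b m) (tstar a b (m + 1))).filter
        (fun u => j u = b ∧ i u ≠ a)).card : ℝ))
    -- arithmetic and weighted averages of the payoff sequences
    (sbar stil : A → B → ℕ → ℝ)
    (hsbar : ∀ a b m, sbar a b m = (∑ k ∈ Finset.Icc 1 m, s a b k) / m)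
    (hstil : ∀ a b m, stil a b m =
      (∑ k ∈ Finset.Icc 1 m, w a b k * s a b k) / (∑ k ∈ Finset.Icc 1 m, w a b k))
    -- the observed reward `x a t` of action `a` at time `t`
    (x : A → ℕ → ℝ)
    (hx : ∀ (a : A) (t : ℕ), x a t = s a (j t)
      ((((Finset.Icc 1 (t - 1)).filter (fun u => i u = a ∧ j u = j t)).card) + 1))
    (hi : ∀ a b, limsup (fun m : ℕ => |sbar a b m - v a b|) atTop ≤ c * ε)
    (hii : ∀ a b, limsup (fun m : ℕ => |stil a b m - sbar a b m|) atTop ≤ ε)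
    (hiii : limsup (fun T : ℕ =>
      ((univ.sup' univ_nonempty fun a => ∑ t ∈ Finset.Icc 1 T, x a t)
        - ∑ t ∈ Finset.Icc 1 T, x (i t) t) / T) atTop ≤ ε) :
    limsup (fun T : ℕ =>
      ((univ.sup' univ_nonempty fun a => ∑ t ∈ Finset.Icc 1 T, v a (j t))
        - ∑ t ∈ Finset.Icc 1 T, v (i t) (j t)) / T) atTop ≤ 2 * (c + 1) * ε := by
  have htstar' : ∀ a b, tstar a b = occ (plays i j a b) := fun a b => funext fun k => by
    cases k with
    | zero => exact htstar0 a b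
    | succ k => exact htstar a b k
  have hx' : ∀ a t, x a t = s a (j t) (Nat.count (plays i j a (j t)) t + 1) := fun a t => by
    rw [hx, count_plays]
  have hw1 : ∀ a b k, 1 ≤ k → 1 ≤ w a b k := fun a b k hk => by
    obtain ⟨k, rfl⟩ := Nat.exists_eq_add_of_le' hk
    simp [hw]
  have hcounterfactual : ∀ a, SlopeLE (fun T => ∑ t ∈ Icc 1 T, (v a (j t) - x a t)) Nat.cast
      (c * ε + ε) := by
    simp only [hx']
    exact slopeLE_sum_counterfactual i j hinf v s w (by simpa only [htstar'] using hw) fun a b =>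
      slopeLE_weighted_of_limsup (hs a b) (hw1 a b) (hsbar a b) (hstil a b) (hi a b) (hii a b)
  have hrealized : SlopeLE (fun T => ∑ t ∈ Icc 1 T, (x (i t) t - v (i t) (j t))) Nat.cast
      (c * ε) := by
    simp only [hx']
    exact slopeLE_sum_realized i j v s fun a b =>
      slopeLE_sum_sub_of_limsup (hs a b) (hsbar a b) (hi a b)
  have hx1 : ∀ a t, |x a t| ≤ 1 := fun a t => by
    obtain ⟨h₀, h₁⟩ := hx' a t ▸ hs a (j t) _ (Nat.le_add_left 1 _)
    rwa [abs_of_nonneg h₀]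
  have hobserved : SlopeLE (regret x i) Nat.cast ε := SlopeLE.of_limsup_div_le
    (fun T => (le_abs_self _).trans (abs_regret_le x i hx1 T)) hiii
  obtain ⟨M, hM⟩ := (Set.finite_range fun ab : A × B => |v ab.1 ab.2|).bddAbove
  have hvM : ∀ a t, |v a (j t)| ≤ M := fun a t => hM ⟨(a, j t), rfl⟩
  show limsup (fun T : ℕ => regret (fun a t => v a (j t)) i T / T) atTop ≤ _
  rw [show 2 * (c + 1) * ε = c * ε + ε + ε + c * ε by ring]
  refine SlopeLE.limsup_div_le (C := -(2 * M)) (fun T => ?_) <|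
    (((SlopeLE.sup' hcounterfactual).add hobserved).add hrealized).mono
      fun T => regret_le_add _ x i T
  linarith [neg_abs_le (regret (fun a t => v a (j t)) i T), abs_regret_le _ i hvM T]

/-- **Proposition 13.**  Suppose every joint action `(a,b)` occurs infinitely often along
the play (time steps `t = 1, 2, …`).  If (i) the arithmetic averages `s̄_{ab}(m)` of the
payoff sequences satisfy `limsup |s̄_{ab}(m) − v a b| ≤ cε`, (ii) the weighted averages
satisfy `limsup |s̃_{ab}(m) − s̄_{ab}(m)| ≤ ε` (unbiased payoff observations), and
(iii) the observed average regret of player 1 satisfies `limsup R(T)/T ≤ ε`, then the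
average regret with respect to the values `v` has `limsup ≤ 2(c+1)ε`; i.e. the choices of
player 1 are `2(c+1)ε`-Hannan consistent with respect to the matrix game `v`. -/
theorem stmt_7 {A B : Type*} [Fintype A] [Fintype B] [Nonempty A] [Nonempty B]
    [DecidableEq A] [DecidableEq B]
    (i : ℕ → A) (j : ℕ → B)
    (hinf : ∀ (a : A) (b : B), {t : ℕ | 1 ≤ t ∧ i t = a ∧ j t = b}.Infinite)
    (ε c : ℝ) (hε : 0 ≤ ε) (hc : 0 ≤ c)
    (v : A → B → ℝ)
    (s : A → B → ℕ → ℝ)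
    (hs : ∀ (a : A) (b : B) (m : ℕ), 1 ≤ m → s a b m ∈ Set.Icc (0 : ℝ) 1)
    -- `tstar a b m` is the time of the `m`-th occurrence of the joint action `(a,b)`,
    -- with the convention `tstar a b 0 = 0`.
    (tstar : A → B → ℕ → ℕ)
    (htstar0 : ∀ a b, tstar a b 0 = 0)
    (htstar : ∀ (a : A) (b : B) (m : ℕ),
      tstar a b (m + 1) = Nat.nth (fun t => 1 ≤ t ∧ i t = a ∧ j t = b) m)
    -- the weights `w_{ab}(m)` for `m ≥ 1`
    (w : A → B → ℕ → ℝ)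
    (hw : ∀ (a : A) (b : B) (m : ℕ), w a b (m + 1) = 1 +
      (((Finset.Icc (tstar a b m) (tstar a b (m + 1))).filter
        (fun u => j u = b ∧ i u ≠ a)).card : ℝ))
    -- arithmetic and weighted averages of the payoff sequences
    (sbar stil : A → B → ℕ → ℝ)
    (hsbar : ∀ a b m, sbar a b m = (∑ k ∈ Finset.Icc 1 m, s a b k) / m)
    (hstil : ∀ a b m, stil a b m =
      (∑ k ∈ Finset.Icc 1 m, w a b k * s a b k) / (∑ k ∈ Finset.Icc 1 m, w a b k))
    -- the observed reward `x a t` of action `a` at time `t`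
    (x : A → ℕ → ℝ)
    (hx : ∀ (a : A) (t : ℕ), x a t = s a (j t)
      ((((Finset.Icc 1 (t - 1)).filter (fun u => i u = a ∧ j u = j t)).card) + 1))
    (hi : ∀ a b, limsup (fun m : ℕ => |sbar a b m - v a b|) atTop ≤ c * ε)
    (hii : ∀ a b, limsup (fun m : ℕ => |stil a b m - sbar a b m|) atTop ≤ ε)
    (hiii : limsup (fun T : ℕ =>
      ((univ.sup' univ_nonempty fun a => ∑ t ∈ Finset.Icc 1 T, x a t)
        - ∑ t ∈ Finset.Icc 1 T, x (i t) t) / T) atTop ≤ ε) :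
    limsup (fun T : ℕ =>
      ((univ.sup' univ_nonempty fun a => ∑ t ∈ Finset.Icc 1 T, v a (j t))
        - ∑ t ∈ Finset.Icc 1 T, v (i t) (j t)) / T) atTop ≤ 2 * (c + 1) * ε :=
  stmt_7_general i j hinf ε c v s hs tstar htstar0 htstar w hw sbar stil hsbar hstil x hx hi hii
    hiii
end

section
/- Let (Ω, ℱ, P) be a probability space with a filtration (ℱ_t)_{t∈ℕ}, let A be a nonempty finite set, and for each t ≥ 1 let σ_t : Ω → (A → ℝ) be ℱ_{t−1}-measurable with σ_t(a) ≥ 0 and ∑_{a∈A} σ_t(a) = 1, and let i_t : Ω → A be ℱ_t-measurable with E[𝟙{i_t = a} | ℱ_{t−1}] = σ_t(a) almost surely for every a ∈ A. Then almost surely lim_{t→∞} max_{a∈A} |σ̂(t)(a) − σ̄(t)(a)| = 0, where σ̂(t)(a) = (1/t) ∑_{s=1}^t 𝟙{i_s = a} is the empirical frequency and σ̄(t)(a) = (1/t) ∑_{s=1}^t σ_s(a) is the average strategy. (Lemma 1: as t approaches infinity, the empirical frequencies and the average strategies are almost surely equal in the limit.) -/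
/-! For a fixed action `a`, the increments `𝟙{i_s = a} - σ_s(a)` are bounded martingale
differences. Expanding `(S_t + X_t)^4` and using that `X_t` is orthogonal to every bounded
`ℱ_t`-measurable function gives `E[S_t^4] = O(t^2)` for their partial sums `S_t`. Hence
`∑_t E[(S_t / t)^4] < ∞`, so `∑_t (S_t / t)^4` is almost surely finite and `S_t / t → 0`
almost surely; a maximum over finitely many actions preserves the limit. -/

open Finset Filter MeasureTheory Topology

section

variable {Ω : Type*} {m0 : MeasurableSpace Ω} {P : Measure Ω}

lemma tendsto_zero_of_tendsto_pow_zero {α : Type*} {l : Filter α} {f : α → ℝ} {n : ℕ}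
    (hn : n ≠ 0) (h : Tendsto (fun x => f x ^ n) l (𝓝 0)) : Tendsto f l (𝓝 0) := by
  rw [Metric.tendsto_nhds] at h ⊢
  intro ε hε
  filter_upwards [h (ε ^ n) (pow_pos hε n)] with x hx
  simp only [Real.dist_eq, sub_zero, abs_pow] at hx ⊢
  exact (pow_lt_pow_iff_left₀ (abs_nonneg _) hε.le hn).1 hx

theorem ae_tendsto_div_atTop_of_integral_pow_four_le {Y : ℕ → Ω → ℝ}
    (hY : ∀ t, Measurable (Y t)) (hint : ∀ t, Integrable (fun ω => Y t ω ^ 4) P) {K : ℝ}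
    (hK : ∀ t : ℕ, ∫ ω, Y t ω ^ 4 ∂P ≤ K * t ^ 2) :
    ∀ᵐ ω ∂P, Tendsto (fun t : ℕ => Y t ω / t) atTop (𝓝 0) := by
  set g : ℕ → Ω → ℝ := fun t ω => (Y t ω / t) ^ 4
  have hg_nonneg : ∀ t ω, 0 ≤ g t ω := fun t ω => by positivity
  have hg_int : ∀ t, Integrable (g t) P := fun t => by
    simpa only [g, div_pow] using (hint t).div_const _
  have hg_le : ∀ t : ℕ, ∫ ω, g t ω ∂P ≤ K * (1 / (t : ℝ) ^ 2) := by
    intro t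
    -- at `t = 0` both sides are `0`, since `x / 0 = 0`
    rcases eq_or_ne t 0 with rfl | ht
    · simp [g]
    · calc ∫ ω, g t ω ∂P = (∫ ω, Y t ω ^ 4 ∂P) / t ^ 4 := by simp only [g, div_pow, integral_div]
        _ ≤ K * t ^ 2 / t ^ 4 := by gcongr; exact hK t
        _ = K * (1 / (t : ℝ) ^ 2) := by field_simp
  have hsum : Summable fun t => ∫ ω, g t ω ∂P :=
    ((Real.summable_one_div_nat_pow.2 one_lt_two).mul_left K).of_nonneg_of_le
      (fun t => integral_nonneg (hg_nonneg t)) hg_le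
  have hmeas : ∀ t, AEMeasurable (fun ω => ENNReal.ofReal (g t ω)) P := fun t =>
    (((hY t).div_const _).pow_const 4).ennreal_ofReal.aemeasurable
  have hfin : ∫⁻ ω, ∑' t, ENNReal.ofReal (g t ω) ∂P ≠ ⊤ := by
    rw [lintegral_tsum hmeas]
    simp_rw [← ofReal_integral_eq_lintegral_ofReal (hg_int _) (.of_forall (hg_nonneg _))]
    rw [← ENNReal.ofReal_tsum_of_nonneg (fun t => integral_nonneg (hg_nonneg t)) hsum]
    exact ENNReal.ofReal_ne_top
  filter_upwards [ae_lt_top' (AEMeasurable.tsum hmeas) hfin] with ω hω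
  have hsummable : Summable fun t => g t ω := by
    simpa [ENNReal.toReal_ofReal (hg_nonneg _ ω)] using ENNReal.summable_toReal hω.ne
  exact tendsto_zero_of_tendsto_pow_zero four_ne_zero hsummable.tendsto_atTop_zero

lemma integrable_comp_prodMk_of_abs_le [IsFiniteMeasure P] {Y X : Ω → ℝ} {B C : ℝ}
    (hY : Measurable Y) (hX : Measurable X) (hYB : ∀ ω, |Y ω| ≤ B) (hXC : ∀ ω, |X ω| ≤ C)
    {F : ℝ × ℝ → ℝ} (hF : Continuous F) : Integrable (fun ω => F (Y ω, X ω)) P := by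
  obtain ⟨K, hK⟩ :=
    (isCompact_Icc.prod isCompact_Icc).exists_bound_of_continuousOn hF.continuousOn
  exact .of_bound (hF.measurable.comp (hY.prodMk hX)).aestronglyMeasurable K
    (.of_forall fun ω => hK _ ⟨abs_le.1 (hYB ω), abs_le.1 (hXC ω)⟩)

lemma integral_mul_eq_zero_of_condExp_eq_zero [IsFiniteMeasure P] {m : MeasurableSpace Ω}
    (hm : m ≤ m0) {f X : Ω → ℝ} {B : ℝ} (hf : StronglyMeasurable[m] f) (hfB : ∀ ω, |f ω| ≤ B)
    (hX : Integrable X P) (hcond : P[X|m] =ᵐ[P] 0) : ∫ ω, f ω * X ω ∂P = 0 := by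
  have hfX : Integrable (f * X) P :=
    hX.bdd_mul (hf.mono hm).aestronglyMeasurable (.of_forall hfB)
  have hzero : P[f * X|m] =ᵐ[P] 0 := by
    filter_upwards [condExp_mul_of_stronglyMeasurable_left hf hfX hX, hcond] with ω h h0
    simp [h, h0]
  calc ∫ ω, f ω * X ω ∂P = ∫ ω, (P[f * X|m]) ω ∂P := (integral_condExp hm).symm
    _ = 0 := by simp [integral_congr_ae hzero]

section Increment

variable [IsProbabilityMeasure P] {m : MeasurableSpace Ω} {Y X : Ω → ℝ} {B C : ℝ}

lemma integral_add_sq_le (hm : m ≤ m0) (hY : Measurable[m] Y) (hX : Measurable[m0] X)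
    (hYB : ∀ ω, |Y ω| ≤ B) (hXC : ∀ ω, |X ω| ≤ C) (hcond : P[X|m] =ᵐ[P] 0) :
    ∫ ω, (Y ω + X ω) ^ 2 ∂P ≤ ∫ ω, Y ω ^ 2 ∂P + C ^ 2 := by
  have hint : ∀ F : ℝ × ℝ → ℝ, Continuous F → Integrable (fun ω => F (Y ω, X ω)) P :=
    fun F hF => integrable_comp_prodMk_of_abs_le (hY.mono hm le_rfl) hX hYB hXC hF
  have horth : ∫ ω, Y ω * X ω ∂P = 0 := integral_mul_eq_zero_of_condExp_eq_zero hm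
    hY.stronglyMeasurable hYB (hint Prod.snd continuous_snd) hcond
  have hX2 : ∫ ω, X ω ^ 2 ∂P ≤ C ^ 2 := by
    have := integral_mono (hint (fun p => p.2 ^ 2) (by fun_prop)) (integrable_const (C ^ 2))
      fun ω => sq_le_sq.2 ((hXC ω).trans (le_abs_self C))
    simpa using this
  have hexp : (fun ω => (Y ω + X ω) ^ 2) = fun ω => Y ω ^ 2 + 2 * (Y ω * X ω) + X ω ^ 2 := by
    ext ω; ring
  have h1 : Integrable (fun ω => Y ω ^ 2) P := hint (fun p => p.1 ^ 2) (by fun_prop)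
  have h2 : Integrable (fun ω => 2 * (Y ω * X ω)) P :=
    hint (fun p => 2 * (p.1 * p.2)) (by fun_prop)
  have h3 : Integrable (fun ω => X ω ^ 2) P := hint (fun p => p.2 ^ 2) (by fun_prop)
  rw [hexp, integral_add (h1.fun_add h2) h3, integral_add h1 h2, integral_const_mul, horth]
  linarith

lemma integral_add_pow_four_le (hm : m ≤ m0) (hY : Measurable[m] Y) (hX : Measurable[m0] X)
    (hYB : ∀ ω, |Y ω| ≤ B) (hXC : ∀ ω, |X ω| ≤ C) (hcond : P[X|m] =ᵐ[P] 0) :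
    ∫ ω, (Y ω + X ω) ^ 4 ∂P
      ≤ ∫ ω, Y ω ^ 4 ∂P + 6 * C ^ 2 * ∫ ω, Y ω ^ 2 ∂P + (4 * B * C ^ 3 + C ^ 4) := by
  have hint : ∀ F : ℝ × ℝ → ℝ, Continuous F → Integrable (fun ω => F (Y ω, X ω)) P :=
    fun F hF => integrable_comp_prodMk_of_abs_le (hY.mono hm le_rfl) hX hYB hXC hF
  have horth : ∫ ω, Y ω ^ 3 * X ω ∂P = 0 := integral_mul_eq_zero_of_condExp_eq_zero hm
    (hY.pow_const 3).stronglyMeasurable (B := B ^ 3)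
    (fun ω => by rw [abs_pow]; exact pow_le_pow_left₀ (abs_nonneg _) (hYB ω) 3)
    (hint Prod.snd continuous_snd) hcond
  have hrest : ∀ ω, 6 * (Y ω ^ 2 * X ω ^ 2) + 4 * (Y ω * X ω ^ 3) + X ω ^ 4
      ≤ 6 * C ^ 2 * Y ω ^ 2 + (4 * B * C ^ 3 + C ^ 4) := by
    intro ω
    have hX2 : X ω ^ 2 ≤ C ^ 2 := sq_le_sq.2 ((hXC ω).trans (le_abs_self C))
    have hX3 : Y ω * X ω ^ 3 ≤ B * C ^ 3 := by
      refine (le_abs_self _).trans ?_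
      rw [abs_mul, abs_pow]
      exact mul_le_mul (hYB ω) (pow_le_pow_left₀ (abs_nonneg _) (hXC ω) 3) (by positivity)
        ((abs_nonneg _).trans (hYB ω))
    have hX4 : X ω ^ 4 ≤ C ^ 4 := by nlinarith [sq_nonneg (X ω)]
    nlinarith [mul_le_mul_of_nonneg_left hX2 (sq_nonneg (Y ω))]
  have hexp : (fun ω => (Y ω + X ω) ^ 4) = fun ω => Y ω ^ 4 + 4 * (Y ω ^ 3 * X ω)
      + (6 * (Y ω ^ 2 * X ω ^ 2) + 4 * (Y ω * X ω ^ 3) + X ω ^ 4) := by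
    ext ω; ring
  have h1 : Integrable (fun ω => Y ω ^ 4) P := hint (fun p => p.1 ^ 4) (by fun_prop)
  have h2 : Integrable (fun ω => 4 * (Y ω ^ 3 * X ω)) P :=
    hint (fun p => 4 * (p.1 ^ 3 * p.2)) (by fun_prop)
  have h3 : Integrable (fun ω => 6 * (Y ω ^ 2 * X ω ^ 2) + 4 * (Y ω * X ω ^ 3) + X ω ^ 4) P :=
    hint (fun p => 6 * (p.1 ^ 2 * p.2 ^ 2) + 4 * (p.1 * p.2 ^ 3) + p.2 ^ 4) (by fun_prop)
  have h4 : Integrable (fun ω => 6 * C ^ 2 * Y ω ^ 2) P :=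
    hint (fun p => 6 * C ^ 2 * p.1 ^ 2) (by fun_prop)
  have hle := integral_mono h3 (h4.fun_add (integrable_const (4 * B * C ^ 3 + C ^ 4))) hrest
  rw [integral_add h4 (integrable_const _), integral_const_mul] at hle
  rw [hexp, integral_add (h1.fun_add h2) h3, integral_add h1 h2, integral_const_mul, horth]
  simp only [integral_const, probReal_univ, one_smul] at hle
  linarith

end Increment

section PartialSums

variable [IsProbabilityMeasure P] {ℱ : Filtration ℕ m0} {X : ℕ → Ω → ℝ} {C : ℝ}

lemma measurable_sum_range (hX : ∀ s, Measurable[ℱ (s + 1)] (X s)) (t : ℕ) :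
    Measurable[ℱ t] fun ω => ∑ s ∈ range t, X s ω :=
  Finset.measurable_sum _ fun s hs => (hX s).mono (ℱ.mono (mem_range.1 hs)) le_rfl

lemma abs_sum_range_le (hXC : ∀ s ω, |X s ω| ≤ C) (t : ℕ) (ω : Ω) :
    |∑ s ∈ range t, X s ω| ≤ t * C :=
  calc |∑ s ∈ range t, X s ω| ≤ ∑ s ∈ range t, |X s ω| := abs_sum_le_sum_abs _ _
    _ ≤ ∑ s ∈ range t, C := sum_le_sum fun s _ => hXC s ω
    _ = t * C := by simp

lemma integral_sum_range_sq_le (hX : ∀ s, Measurable[ℱ (s + 1)] (X s))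
    (hXC : ∀ s ω, |X s ω| ≤ C) (hcond : ∀ s, P[X s|ℱ s] =ᵐ[P] 0) (t : ℕ) :
    ∫ ω, (∑ s ∈ range t, X s ω) ^ 2 ∂P ≤ t * C ^ 2 := by
  induction t with
  | zero => simp
  | succ t ih =>
    simp_rw [sum_range_succ]
    have := integral_add_sq_le (ℱ.le t) (measurable_sum_range hX t)
      ((hX t).mono (ℱ.le _) le_rfl) (abs_sum_range_le hXC t) (hXC t) (hcond t)
    push_cast
    linarith

lemma integral_sum_range_pow_four_le (hX : ∀ s, Measurable[ℱ (s + 1)] (X s))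
    (hXC : ∀ s ω, |X s ω| ≤ C) (hcond : ∀ s, P[X s|ℱ s] =ᵐ[P] 0) (t : ℕ) :
    ∫ ω, (∑ s ∈ range t, X s ω) ^ 4 ∂P ≤ 6 * C ^ 4 * t ^ 2 := by
  induction t with
  | zero => simp
  | succ t ih =>
    simp_rw [sum_range_succ]
    have hstep := integral_add_pow_four_le (ℱ.le t) (measurable_sum_range hX t)
      ((hX t).mono (ℱ.le _) le_rfl) (abs_sum_range_le hXC t) (hXC t) (hcond t)
    have hsq := mul_le_mul_of_nonneg_left (integral_sum_range_sq_le hX hXC hcond t)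
      (by positivity : (0 : ℝ) ≤ 6 * C ^ 2)
    have : 0 ≤ C ^ 4 * (2 * t + 5) := by positivity
    push_cast
    nlinarith

theorem ae_tendsto_sum_range_div_of_condExp_eq_zero (hX : ∀ s, Measurable[ℱ (s + 1)] (X s))
    (hXC : ∀ s ω, |X s ω| ≤ C) (hcond : ∀ s, P[X s|ℱ s] =ᵐ[P] 0) :
    ∀ᵐ ω ∂P, Tendsto (fun t : ℕ => (∑ s ∈ range t, X s ω) / t) atTop (𝓝 0) := by
  have hS : ∀ t, Measurable fun ω => ∑ s ∈ range t, X s ω := fun t =>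
    (measurable_sum_range hX t).mono (ℱ.le t) le_rfl
  refine ae_tendsto_div_atTop_of_integral_pow_four_le hS (fun t => ?_)
    (integral_sum_range_pow_four_le hX hXC hcond)
  refine .of_bound ((hS t).pow_const 4).aestronglyMeasurable ((t * C) ^ 4) (.of_forall fun ω => ?_)
  rw [Real.norm_eq_abs, abs_pow]
  exact pow_le_pow_left₀ (abs_nonneg _) (abs_sum_range_le hXC t ω) 4

end PartialSums

theorem ae_tendsto_sum_range_sub_div_of_condExp_eq [IsProbabilityMeasure P]
    {ℱ : Filtration ℕ m0} {Z p : ℕ → Ω → ℝ} {C : ℝ}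
    (hZ : ∀ s, Measurable[ℱ (s + 1)] (Z s)) (hp : ∀ s, Measurable[ℱ s] (p s))
    (hZC : ∀ s ω, |Z s ω| ≤ C) (hpC : ∀ s ω, |p s ω| ≤ C) (hcond : ∀ s, P[Z s|ℱ s] =ᵐ[P] p s) :
    ∀ᵐ ω ∂P, Tendsto (fun t : ℕ => (∑ s ∈ range t, Z s ω) / t - (∑ s ∈ range t, p s ω) / t)
      atTop (𝓝 0) := by
  have hp_int : ∀ s, Integrable (p s) P := fun s =>
    .of_bound ((hp s).mono (ℱ.le s) le_rfl).aestronglyMeasurable C (.of_forall (hpC s))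
  have hZ_int : ∀ s, Integrable (Z s) P := fun s =>
    .of_bound ((hZ s).mono (ℱ.le _) le_rfl).aestronglyMeasurable C (.of_forall (hZC s))
  have hcentered : ∀ s, P[Z s - p s|ℱ s] =ᵐ[P] 0 := fun s => by
    filter_upwards [condExp_sub (hZ_int s) (hp_int s) (ℱ s), hcond s] with ω h hZω
    simp [h, hZω, condExp_of_stronglyMeasurable (ℱ.le s) (hp s).stronglyMeasurable (hp_int s)]
  filter_upwards [ae_tendsto_sum_range_div_of_condExp_eq_zero (C := C + C)
    (fun s => (hZ s).sub ((hp s).mono (ℱ.mono s.le_succ) le_rfl))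
    (fun s ω => (abs_sub _ _).trans (add_le_add (hZC s ω) (hpC s ω))) hcentered] with ω hω
  simpa only [Pi.sub_apply, sum_sub_distrib, sub_div] using hω

end

/-- **Lemma 1.**  Let `(ℱ_t)` be a filtration, `σ (t)` an `ℱ t`-measurable mixed strategy
over the finite action set `A` (the strategy used at time step `t+1`), and `i t` the
action played at time step `t+1`, `ℱ (t+1)`-measurable with conditional distribution
`σ t` given `ℱ t`.  Then almost surely the empirical frequencies and the average
strategies are equal in the limit:
`max_{a∈A} |σ̂(t)(a) − σ̄(t)(a)| → 0` as `t → ∞`. -/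
theorem stmt_8 {Ω : Type*} {m0 : MeasurableSpace Ω} (P : Measure Ω) [IsProbabilityMeasure P]
    (ℱ : Filtration ℕ m0)
    {A : Type*} [Fintype A] [Nonempty A] [DecidableEq A]
    [MeasurableSpace A] [MeasurableSingletonClass A]
    (σ : ℕ → Ω → A → ℝ) (i : ℕ → Ω → A)
    (hσ_meas : ∀ (t : ℕ) (a : A), Measurable[ℱ t] (fun ω => σ t ω a))
    (hσ_nonneg : ∀ (t : ℕ) (ω : Ω) (a : A), 0 ≤ σ t ω a)
    (hσ_sum : ∀ (t : ℕ) (ω : Ω), ∑ a, σ t ω a = 1)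
    (hi_meas : ∀ t : ℕ, Measurable[ℱ (t + 1)] (i t))
    (hcond : ∀ (t : ℕ) (a : A),
      (P[(fun ω => if i t ω = a then (1 : ℝ) else 0) | ℱ t]) =ᵐ[P] fun ω => σ t ω a) :
    ∀ᵐ ω ∂P, Tendsto (fun t : ℕ =>
      univ.sup' univ_nonempty fun a : A =>
        |(((Finset.range t).filter (fun s => i s ω = a)).card : ℝ) / t
          - (∑ s ∈ Finset.range t, σ s ω a) / t|) atTop (nhds 0) := by
  have hσ_abs : ∀ t ω a, |σ t ω a| ≤ 1 := fun t ω a => by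
    rw [abs_of_nonneg (hσ_nonneg t ω a), ← hσ_sum t ω]
    exact single_le_sum (fun b _ => hσ_nonneg t ω b) (mem_univ a)
  have hfreq : ∀ a, ∀ᵐ ω ∂P, Tendsto (fun t : ℕ =>
      (∑ s ∈ range t, if i s ω = a then (1 : ℝ) else 0) / t - (∑ s ∈ range t, σ s ω a) / t)
      atTop (𝓝 0) := fun a =>
    ae_tendsto_sum_range_sub_div_of_condExp_eq
      (fun s => measurable_const.ite (hi_meas s (measurableSet_singleton a)) measurable_const)
      (fun s => hσ_meas s a) (fun s ω => by split_ifs <;> simp) (fun s ω => hσ_abs s ω a)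
      (fun s => hcond s a)
  filter_upwards [ae_all_iff.2 hfreq] with ω hω
  have := Tendsto.finset_sup'_nhds_apply univ_nonempty fun a _ => (hω a).abs
  simp only [abs_zero, sup'_const] at this
  simpa only [natCast_card_filter] using this
end

section
/- Let A be a nonempty finite set, x : ℕ → A → ℝ reward sequences with x s a ∈ [0,1] for all s, a, and i : ℕ → A a sequence of chosen actions. Let E ⊆ ℕ be a set of exploration rounds, e(t) = |E ∩ {1,…,t}|, and m(t) = t − e(t). Let ε ≥ 0 and γ ∈ [0,1), and suppose lim_{t→∞} e(t)/t = γ and the average regret over non-exploration rounds satisfies limsup_{t→∞} (1/m(t)) (max_{a∈A} ∑_{s≤t, s∉E} x s a − ∑_{s≤t, s∉E} x s (i s)) ≤ ε. Then the overall average regret satisfies limsup_{t→∞} R(t)/t ≤ ε + γ, where R(t) = max_{a∈A} ∑_{s=1}^t x s a − ∑_{s=1}^t x s (i s). (Deterministic core of Lemma 2: the exploration-modified algorithm A* obtained from an ε-Hannan consistent algorithm by exploring uniformly with probability γ is (ε+γ)-Hannan consistent; the hypothesis lim e(t)/t = γ holds almost surely by the strong law of large numbers.) -/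
open Finset Filter

/-- **Deterministic core of Lemma 2.**  If the exploration rounds `E` have asymptotic
frequency `γ` and the average regret over the non-exploration rounds has `limsup ≤ ε`,
then the overall average regret has `limsup ≤ ε + γ`.  (Hence the exploration-modified
algorithm `A*` obtained from an ε-Hannan consistent algorithm is `(ε+γ)`-Hannan
consistent.) -/
theorem stmt_9 {A : Type*} [Fintype A] [Nonempty A]
    (x : ℕ → A → ℝ) (hx : ∀ s a, x s a ∈ Set.Icc (0 : ℝ) 1)
    (i : ℕ → A)
    (E : Set ℕ) [DecidablePred (· ∈ E)]
    (ε γ : ℝ) (hε : 0 ≤ ε) (hγ : γ ∈ Set.Ico (0 : ℝ) 1)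
    (e m : ℕ → ℕ)
    (he : ∀ t, e t = ((Finset.range t).filter (fun s => s ∈ E)).card)
    (hm : ∀ t, m t = t - e t)
    (hfreq : Tendsto (fun t : ℕ => (e t : ℝ) / t) atTop (nhds γ))
    (hreg : limsup (fun t : ℕ =>
      ((univ.sup' univ_nonempty fun a =>
          ∑ s ∈ (Finset.range t).filter (fun s => s ∉ E), x s a)
        - ∑ s ∈ (Finset.range t).filter (fun s => s ∉ E), x s (i s)) / (m t : ℝ))
      atTop ≤ ε) :
    limsup (fun t : ℕ =>
      ((univ.sup' univ_nonempty fun a => ∑ s ∈ Finset.range t, x s a)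
        - ∑ s ∈ Finset.range t, x s (i s)) / t) atTop ≤ ε + γ := by
  have hx0 : ∀ s a, 0 ≤ x s a := fun s a => (hx s a).1
  have hx1 : ∀ s a, x s a ≤ 1 := fun s a => (hx s a).2
  set g : ℕ → ℝ := fun t =>
      ((univ.sup' univ_nonempty fun a =>
          ∑ s ∈ (Finset.range t).filter (fun s => s ∉ E), x s a)
        - ∑ s ∈ (Finset.range t).filter (fun s => s ∉ E), x s (i s)) / (m t : ℝ) with hgdef
  set f : ℕ → ℝ := fun t =>
      ((univ.sup' univ_nonempty fun a => ∑ s ∈ Finset.range t, x s a)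
        - ∑ s ∈ Finset.range t, x s (i s)) / t with hfdef
  have hcard : ∀ t, ((Finset.range t).filter (fun s => s ∉ E)).card = m t := by
    intro t
    have h := Finset.card_filter_add_card_filter_not
      (s := Finset.range t) (p := fun s => s ∈ E)
    rw [hm, he]
    simp only [Finset.card_range] at h ⊢
    omega
  have helt : ∀ t, e t ≤ t := by
    intro t; rw [he]
    simpa using Finset.card_filter_le (Finset.range t) (fun s => s ∈ E)
  -- nonneg of sup'
  have hsup_nonneg : ∀ (s : Finset ℕ), (0:ℝ) ≤ univ.sup' univ_nonempty fun a => ∑ u ∈ s, x u a := by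
    intro s
    obtain ⟨a⟩ := ‹Nonempty A›
    refine le_trans ?_ (Finset.le_sup' (fun a => ∑ u ∈ s, x u a) (Finset.mem_univ a))
    exact Finset.sum_nonneg fun u _ => hx0 u a
  have hsup_le_card : ∀ (s : Finset ℕ),
      (univ.sup' univ_nonempty fun a => ∑ u ∈ s, x u a) ≤ (s.card : ℝ) := by
    intro s
    refine Finset.sup'_le _ _ fun a _ => ?_
    calc ∑ u ∈ s, x u a ≤ ∑ u ∈ s, (1:ℝ) := Finset.sum_le_sum fun u _ => hx1 u a
    _ = s.card := by simp
  have hg1 : ∀ t, g t ≤ 1 := by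
    intro t
    by_cases h : m t = 0
    · simp [hgdef, h]
    · have hmpos : (0:ℝ) < m t := by exact_mod_cast Nat.pos_of_ne_zero h
      rw [hgdef, div_le_one hmpos]
      have h1 := hsup_le_card ((Finset.range t).filter (fun s => s ∉ E))
      rw [hcard] at h1
      have h2 : (0:ℝ) ≤ ∑ s ∈ (Finset.range t).filter (fun s => s ∉ E), x s (i s) :=
        Finset.sum_nonneg fun s _ => hx0 s (i s)
      linarith
  have hgbdd : IsBoundedUnder (· ≤ ·) atTop g := isBoundedUnder_of ⟨1, hg1⟩
  have hfm1 : ∀ t, -1 ≤ f t := by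
    intro t
    rcases Nat.eq_zero_or_pos t with h | h
    · simp [hfdef, h]
    · have ht : (0:ℝ) < t := by exact_mod_cast h
      rw [hfdef, le_div_iff₀ ht]
      have h1 := hsup_nonneg (Finset.range t)
      have h2 : ∑ s ∈ Finset.range t, x s (i s) ≤ (t:ℝ) := by
        calc ∑ s ∈ Finset.range t, x s (i s) ≤ ∑ s ∈ Finset.range t, (1:ℝ) :=
          Finset.sum_le_sum fun s _ => hx1 s (i s)
        _ = t := by simp
      linarith
  have hfcobdd : IsCoboundedUnder (· ≤ ·) atTop f :=
    IsBoundedUnder.isCoboundedUnder_le (isBoundedUnder_of ⟨-1, fun t => hfm1 t⟩)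
  -- key pointwise estimate
  have hST : ∀ t, ((univ.sup' univ_nonempty fun a => ∑ s ∈ Finset.range t, x s a)
        - ∑ s ∈ Finset.range t, x s (i s))
      ≤ ((univ.sup' univ_nonempty fun a =>
          ∑ s ∈ (Finset.range t).filter (fun s => s ∉ E), x s a)
        - ∑ s ∈ (Finset.range t).filter (fun s => s ∉ E), x s (i s)) + e t := by
    intro t
    have h1 : (univ.sup' univ_nonempty fun a => ∑ s ∈ Finset.range t, x s a)
        ≤ (univ.sup' univ_nonempty fun a =>
            ∑ s ∈ (Finset.range t).filter (fun s => s ∉ E), x s a) + e t := by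
      refine Finset.sup'_le _ _ fun a _ => ?_
      have hsplit : ∑ s ∈ Finset.range t, x s a
          = ∑ s ∈ (Finset.range t).filter (fun s => s ∈ E), x s a
            + ∑ s ∈ (Finset.range t).filter (fun s => s ∉ E), x s a :=
        (Finset.sum_filter_add_sum_filter_not (Finset.range t) (fun s => s ∈ E) _).symm
      have hE : ∑ s ∈ (Finset.range t).filter (fun s => s ∈ E), x s a ≤ (e t : ℝ) := by
        rw [he]
        calc ∑ s ∈ (Finset.range t).filter (fun s => s ∈ E), x s a
            ≤ ∑ s ∈ (Finset.range t).filter (fun s => s ∈ E), (1:ℝ) :=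
              Finset.sum_le_sum fun s _ => hx1 s a
          _ = _ := by simp
      have hle := Finset.le_sup' (fun a =>
        ∑ s ∈ (Finset.range t).filter (fun s => s ∉ E), x s a) (Finset.mem_univ a)
      linarith
    have h2 : ∑ s ∈ (Finset.range t).filter (fun s => s ∉ E), x s (i s)
        ≤ ∑ s ∈ Finset.range t, x s (i s) :=
      Finset.sum_le_sum_of_subset_of_nonneg (Finset.filter_subset _ _)
        (fun s _ _ => hx0 s (i s))
    linarith
  have hpt : ∀ t, 1 ≤ t → f t ≤ max (g t) 0 + (e t : ℝ) / t := by
    intro t ht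
    have htpos : (0:ℝ) < t := by exact_mod_cast ht
    by_cases h : m t = 0
    · have het : e t = t := by have := helt t; rw [hm] at h; omega
      have hf1 : f t ≤ 1 := by
        rw [hfdef, div_le_one htpos]
        have h1 := hsup_le_card (Finset.range t)
        rw [Finset.card_range] at h1
        have h2 : (0:ℝ) ≤ ∑ s ∈ Finset.range t, x s (i s) :=
          Finset.sum_nonneg fun s _ => hx0 s (i s)
        linarith
      have : (e t : ℝ) / t = 1 := by rw [het]; field_simp
      have hmax : (0:ℝ) ≤ max (g t) 0 := le_max_right _ _
      linarith
    · have hmpos : (0:ℝ) < m t := by exact_mod_cast Nat.pos_of_ne_zero h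
      have hmlet : (m t : ℝ) ≤ t := by
        have : m t ≤ t := by rw [hm]; omega
        exact_mod_cast this
      set N : ℝ := (univ.sup' univ_nonempty fun a =>
          ∑ s ∈ (Finset.range t).filter (fun s => s ∉ E), x s a)
        - ∑ s ∈ (Finset.range t).filter (fun s => s ∉ E), x s (i s) with hN
      have key : f t ≤ N / t + (e t : ℝ) / t := by
        rw [hfdef, ← add_div]
        exact div_le_div_of_nonneg_right (by simpa using hST t) htpos.le
      have hNt : N / t ≤ max (g t) 0 := by
        rcases le_or_gt N 0 with hN0 | hN0
        · exact le_trans (div_nonpos_of_nonpos_of_nonneg hN0 htpos.le) (le_max_right _ _)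
        · have : N / t ≤ N / m t :=
            div_le_div_of_nonneg_left hN0.le hmpos hmlet
          exact this.trans (le_max_left _ _)
      linarith
  refine le_of_forall_pos_le_add fun δ hδ => ?_
  have hδ2 : 0 < δ / 2 := by positivity
  have h1 : ∀ᶠ t in atTop, g t < ε + δ / 2 :=
    eventually_lt_of_limsup_lt (lt_of_le_of_lt hreg (by linarith)) hgbdd
  have h2 : ∀ᶠ t in atTop, (e t : ℝ) / t < γ + δ / 2 := by
    have : γ < γ + δ / 2 := by linarith
    exact hfreq.eventually (eventually_lt_nhds this) |>.mono fun t ht => ht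
  refine limsup_le_of_le hfcobdd ?_
  filter_upwards [h1, h2, eventually_ge_atTop 1] with t hgt het ht1
  have := hpt t ht1
  have hmax : max (g t) 0 ≤ ε + δ / 2 := max_le hgt.le (by linarith)
  linarith
end

section
/- Let (Ω, ℱ, P) be a probability space, C ≥ 1, v ∈ [0,1], ε > 0, and let (s(n))_{n≥1} and (w(n))_{n≥1} be random variables such that: the family {s(n), w(n) : n ∈ ℕ} is mutually independent; s(n) ∈ [0,1] and w(n) ∈ [1,C] almost surely for all n; and E[|s(n) − v|] ≤ ε/2 for all n. Then almost surely limsup_{n→∞} |s̄(n) − s̃(n)| ≤ ε, where s̄(n) = (1/n) ∑_{m=1}^n s(m) and s̃(n) = (∑_{m=1}^n w(m) s(m)) / (∑_{m=1}^n w(m)). (Example 11, part 1: a sufficient condition for ε-unbiased payoff observations; the weights arising from SM-MCTS always satisfy w ≥ 1, which also makes the weighted average well defined.) -/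
/-!
With `d m = s m - v`, the arithmetic average is within `(1/n) ∑ |d m|` of `v` and the weighted
one within `|∑ w m * d m| / ∑ w m`. Replacing `|d m|`, `w m * d m` and `w m` by their
expectations, each average lies within `ε/2` of `v`: for the weighted one because independence
gives `E[w m * d m] = E[w m] E[d m]` with `|E[d m]| ≤ ε/2`, and `∑ w m ≥ n` since `w ≥ 1`.
The replacement errors vanish almost surely by the strong law of large numbers for bounded,
pairwise independent (not identically distributed) variables: Chebyshev's inequality and
Borel–Cantelli give it along the squares `n = k²`, and bounded increments fill the gaps.
-/

open Finset Filter MeasureTheory ProbabilityTheory Topology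

lemma abs_sub_le_mul_of_abs_succ_sub_le {S : ℕ → ℝ} {K : ℝ} (hS : ∀ n, |S (n + 1) - S n| ≤ K)
    {m n : ℕ} (hmn : m ≤ n) : |S n - S m| ≤ (n - m : ℕ) * K := by
  have h := dist_le_Ico_sum_of_dist_le (f := S) (d := fun _ => K) hmn
    fun _ _ => by rw [Real.dist_eq, abs_sub_comm]; exact hS _
  rwa [sum_const, Nat.card_Ico, nsmul_eq_mul, Real.dist_eq, abs_sub_comm] at h

lemma tendsto_atTop_sqrt : Tendsto Nat.sqrt atTop atTop :=
  tendsto_atTop_atTop.2 fun b => ⟨b * b, fun _ hn => Nat.le_sqrt.2 hn⟩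

lemma tendsto_div_of_tendsto_sq_div {S : ℕ → ℝ} {K : ℝ} (hS : ∀ n, |S (n + 1) - S n| ≤ K)
    (h : Tendsto (fun k : ℕ => S (k ^ 2) / (k : ℝ) ^ 2) atTop (𝓝 0)) :
    Tendsto (fun n : ℕ => S n / n) atTop (𝓝 0) := by
  have hK : 0 ≤ K := (abs_nonneg _).trans (hS 0)
  have hbound : Tendsto (fun n => |S (Nat.sqrt n ^ 2) / (Nat.sqrt n : ℝ) ^ 2|
      + 2 * K / Nat.sqrt n) atTop (𝓝 0) := by
    simpa using (h.abs.comp tendsto_atTop_sqrt).add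
      ((tendsto_const_div_atTop_nhds_zero_nat (2 * K)).comp tendsto_atTop_sqrt)
  refine squeeze_zero_norm' ?_ hbound
  filter_upwards [eventually_ge_atTop 1] with n hn
  set k := Nat.sqrt n
  have hk : 1 ≤ k := Nat.le_sqrt.2 hn
  have hkn : k ^ 2 ≤ n := by rw [sq]; exact Nat.sqrt_le n
  have hnk : n - k ^ 2 ≤ 2 * k := by
    have hlt : n < (k + 1) * (k + 1) := Nat.lt_succ_sqrt n
    have hsq : (k + 1) * (k + 1) = k * k + 2 * k + 1 := by ring
    rw [sq]; omega
  have hkn' : (k : ℝ) ^ 2 ≤ n := by exact_mod_cast hkn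
  have hdiff : |S n - S (k ^ 2)| ≤ 2 * k * K := by
    refine (abs_sub_le_mul_of_abs_succ_sub_le hS hkn).trans ?_
    gcongr
    exact_mod_cast hnk
  rw [Real.norm_eq_abs, abs_div, Nat.abs_cast, div_le_iff₀ (by positivity)]
  calc |S n| ≤ |S (k ^ 2)| + 2 * k * K := by
        linarith [abs_sub_abs_le_abs_sub (S n) (S (k ^ 2))]
    _ = (|S (k ^ 2) / (k : ℝ) ^ 2| + 2 * K / k) * (k : ℝ) ^ 2 := by
        rw [abs_div, abs_of_pos (by positivity : (0 : ℝ) < (k : ℝ) ^ 2)]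
        field_simp
    _ ≤ (|S (k ^ 2) / (k : ℝ) ^ 2| + 2 * K / k) * n := by gcongr

lemma memLp_of_abs_le {Ω : Type*} [MeasurableSpace Ω] {P : Measure Ω} [IsFiniteMeasure P]
    {f : Ω → ℝ} {M : ℝ} (hf : Measurable f) (hbd : ∀ᵐ ω ∂P, |f ω| ≤ M) (p : ENNReal) :
    MemLp f p P :=
  MemLp.of_bound hf.aestronglyMeasurable M (by simpa only [Real.norm_eq_abs] using hbd)

section BoundedStrongLaw

variable {Ω : Type*} [MeasurableSpace Ω] {P : Measure Ω} [IsProbabilityMeasure P]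
  {X : ℕ → Ω → ℝ} {M : ℝ}

lemma variance_sum_range_le (hmeas : ∀ n, Measurable (X n))
    (hindep : Pairwise fun i j => IndepFun (X i) (X j) P) (hbd : ∀ n, ∀ᵐ ω ∂P, |X n ω| ≤ M)
    (n : ℕ) : variance (∑ m ∈ range n, X m) P ≤ n * M ^ 2 := by
  have hvar : ∀ m, variance (X m) P ≤ M ^ 2 := fun m => by
    have h := variance_le_sq_of_bounded (a := -M) (b := M)
      ((hbd m).mono fun ω hω => abs_le.1 hω) (hmeas m).aemeasurable
    rwa [show (M - -M) / 2 = M by ring] at h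
  rw [IndepFun.variance_sum (fun m _ => memLp_of_abs_le (hmeas m) (hbd m) 2)
    fun i _ j _ hij => hindep hij]
  simpa using sum_le_sum fun m (_ : m ∈ range n) => hvar m

lemma ae_eventually_abs_sum_sq_lt (hmeas : ∀ n, Measurable (X n))
    (hindep : Pairwise fun i j => IndepFun (X i) (X j) P) (hbd : ∀ n, ∀ᵐ ω ∂P, |X n ω| ≤ M)
    {δ : ℝ} (hδ : 0 < δ) :
    ∀ᵐ ω ∂P, ∀ᶠ k : ℕ in atTop,
      |∑ m ∈ range ((k + 1) ^ 2), (X m ω - ∫ ω', X m ω' ∂P)| < δ * ((k : ℝ) + 1) ^ 2 := by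
  set T : ℕ → Ω → ℝ := fun n => ∑ m ∈ range n, X m
  have hT : ∀ n ω, T n ω - ∫ ω', T n ω' ∂P = ∑ m ∈ range n, (X m ω - ∫ ω', X m ω' ∂P) := by
    intro n ω
    simp only [T, Finset.sum_apply]
    rw [integral_finsetSum _ fun m _ => (memLp_of_abs_le (hmeas m) (hbd m) 1).integrable le_rfl,
      sum_sub_distrib]
  set A : ℕ → Set Ω :=
    fun k => {ω | δ * ((k : ℝ) + 1) ^ 2 ≤ |T ((k + 1) ^ 2) ω - P[T ((k + 1) ^ 2)]|}
  have hchebyshev : ∀ k, P (A k) ≤ ENNReal.ofReal (M ^ 2 / δ ^ 2 * (1 / ((k : ℝ) + 1) ^ 2)) := by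
    intro k
    have hvar := variance_sum_range_le hmeas hindep hbd ((k + 1) ^ 2)
    push_cast at hvar
    refine (meas_ge_le_variance_div_sq
      (memLp_finsetSum' _ fun m _ => memLp_of_abs_le (hmeas m) (hbd m) 2)
      (by positivity)).trans (ENNReal.ofReal_le_ofReal ?_)
    calc variance (T ((k + 1) ^ 2)) P / (δ * ((k : ℝ) + 1) ^ 2) ^ 2
        ≤ ((k : ℝ) + 1) ^ 2 * M ^ 2 / (δ * ((k : ℝ) + 1) ^ 2) ^ 2 := by gcongr
      _ = M ^ 2 / δ ^ 2 * (1 / ((k : ℝ) + 1) ^ 2) := by field_simp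
  have hsummable : Summable fun k : ℕ => M ^ 2 / δ ^ 2 * (1 / ((k : ℝ) + 1) ^ 2) := by
    refine .mul_left _ ?_
    exact_mod_cast (summable_nat_add_iff 1).2 (Real.summable_one_div_nat_pow.2 one_lt_two)
  have htsum : ∑' k, P (A k) ≠ ⊤ := by
    refine ne_top_of_le_ne_top ?_ (ENNReal.tsum_le_tsum hchebyshev)
    rw [← ENNReal.ofReal_tsum_of_nonneg (fun k => by positivity) hsummable]
    exact ENNReal.ofReal_ne_top
  filter_upwards [ae_eventually_notMem htsum] with ω hω
  filter_upwards [hω] with k hk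
  simpa [A, hT] using hk

lemma ae_tendsto_sum_sq_div (hmeas : ∀ n, Measurable (X n))
    (hindep : Pairwise fun i j => IndepFun (X i) (X j) P) (hbd : ∀ n, ∀ᵐ ω ∂P, |X n ω| ≤ M) :
    ∀ᵐ ω ∂P, Tendsto (fun k : ℕ =>
      (∑ m ∈ range (k ^ 2), (X m ω - ∫ ω', X m ω' ∂P)) / (k : ℝ) ^ 2) atTop (𝓝 0) := by
  filter_upwards [ae_all_iff.2 fun j : ℕ =>
    ae_eventually_abs_sum_sq_lt hmeas hindep hbd (Nat.one_div_pos_of_nat (n := j))] with ω hω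
  rw [← tendsto_add_atTop_iff_nat 1, Metric.tendsto_atTop]
  intro ε hε
  obtain ⟨j, hj⟩ := exists_nat_one_div_lt hε
  obtain ⟨K, hK⟩ := eventually_atTop.1 (hω j)
  refine ⟨K, fun k hk => ?_⟩
  push_cast
  rw [Real.dist_eq, sub_zero, abs_div, abs_of_pos (by positivity : (0 : ℝ) < ((k : ℝ) + 1) ^ 2),
    div_lt_iff₀ (by positivity)]
  exact (hK k hk).trans_le (by gcongr)

theorem ae_tendsto_avg_sub_integral (hmeas : ∀ n, Measurable (X n))
    (hindep : Pairwise fun i j => IndepFun (X i) (X j) P) (hbd : ∀ n, ∀ᵐ ω ∂P, |X n ω| ≤ M) :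
    ∀ᵐ ω ∂P, Tendsto (fun n : ℕ =>
      (∑ m ∈ range n, (X m ω - ∫ ω', X m ω' ∂P)) / n) atTop (𝓝 0) := by
  filter_upwards [ae_tendsto_sum_sq_div hmeas hindep hbd, ae_all_iff.2 hbd] with ω hω hbdω
  refine tendsto_div_of_tendsto_sq_div (K := M + M) (fun n => ?_) hω
  have hint : |∫ ω', X n ω' ∂P| ≤ M := by
    simpa using norm_integral_le_of_norm_le_const (μ := P) (f := X n) (by simpa using hbd n)
  rw [sum_range_succ, add_sub_cancel_left]
  exact (abs_sub _ _).trans (add_le_add (hbdω n) hint)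

end BoundedStrongLaw

lemma ProbabilityTheory.iIndepFun.pairwise_indepFun_comp_sumElim {Ω ι β γ : Type*}
    [MeasurableSpace Ω] {P : Measure Ω} [MeasurableSpace β] [MeasurableSpace γ] {s w : ι → Ω → β}
    (h : iIndepFun (Sum.elim s w) P) (hs : ∀ i, Measurable (s i)) (hw : ∀ i, Measurable (w i))
    {φ : β × β → γ} (hφ : Measurable φ) :
    Pairwise fun i j => IndepFun (fun ω => φ (s i ω, w i ω)) (fun ω => φ (s j ω, w j ω)) P :=
  fun i j hij => (h.indepFun_prodMk_prodMk (Sum.forall.2 ⟨hs, hw⟩) (.inl i) (.inr i) (.inl j)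
    (.inr j) (by simpa using hij) (by simp) (by simp) (by simpa using hij)).comp hφ hφ

theorem ProbabilityTheory.iIndepFun.ae_tendsto_avg_sub_integral_comp {Ω : Type*}
    [MeasurableSpace Ω] {P : Measure Ω} [IsProbabilityMeasure P] {s w : ℕ → Ω → ℝ}
    (h : iIndepFun (Sum.elim s w) P) (hs : ∀ n, Measurable (s n)) (hw : ∀ n, Measurable (w n))
    {φ : ℝ × ℝ → ℝ} (hφ : Measurable φ) {M : ℝ}
    (hbd : ∀ n, ∀ᵐ ω ∂P, |φ (s n ω, w n ω)| ≤ M) :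
    ∀ᵐ ω ∂P, Tendsto (fun n : ℕ => (∑ m ∈ range n,
      (φ (s m ω, w m ω) - ∫ ω', φ (s m ω', w m ω') ∂P)) / n) atTop (𝓝 0) :=
  ae_tendsto_avg_sub_integral (X := fun n ω => φ (s n ω, w n ω))
    (fun n => hφ.comp ((hs n).prodMk (hw n))) (h.pairwise_indepFun_comp_sumElim hs hw hφ) hbd

lemma abs_integral_mul_le_of_indepFun {Ω : Type*} [MeasurableSpace Ω] {P : Measure Ω}
    {W D : Ω → ℝ} {c : ℝ} (hWD : IndepFun W D P) (hW : AEStronglyMeasurable W P)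
    (hD : AEStronglyMeasurable D P) (hW0 : 0 ≤ᵐ[P] W) (hDc : |∫ ω, D ω ∂P| ≤ c) :
    |∫ ω, W ω * D ω ∂P| ≤ c * ∫ ω, W ω ∂P := by
  rw [hWD.integral_fun_mul_eq_mul_integral hW hD, abs_mul,
    abs_of_nonneg (integral_nonneg_of_ae hW0), mul_comm]
  exact mul_le_mul_of_nonneg_right hDc (integral_nonneg_of_ae hW0)

lemma abs_avg_sub_le {s a : ℕ → ℝ} {c : ℝ} (v : ℝ) (ha : ∀ m, a m ≤ c) {n : ℕ} (hn : 0 < n) :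
    |(∑ m ∈ range n, s m) / n - v| ≤ c + (∑ m ∈ range n, (|s m - v| - a m)) / n := by
  have hn' : (0 : ℝ) < n := by exact_mod_cast hn
  have hsum_a : ∑ m ∈ range n, a m ≤ n * c := by
    simpa using sum_le_sum fun m (_ : m ∈ range n) => ha m
  calc |(∑ m ∈ range n, s m) / n - v| = |∑ m ∈ range n, (s m - v)| / n := by
        rw [sum_sub_distrib, sum_const, card_range, nsmul_eq_mul, div_sub' hn'.ne', abs_div,
          Nat.abs_cast, mul_comm]
    _ ≤ (∑ m ∈ range n, |s m - v|) / n := by gcongr; exact abs_sum_le_sum_abs _ _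
    _ = (∑ m ∈ range n, a m) / n + (∑ m ∈ range n, (|s m - v| - a m)) / n := by
        rw [sum_sub_distrib]; ring
    _ ≤ c + (∑ m ∈ range n, (|s m - v| - a m)) / n := by
        gcongr; rwa [div_le_iff₀ hn', mul_comm]

lemma abs_wavg_sub_le {s w μ ν : ℕ → ℝ} {c : ℝ} (v : ℝ) (hc : 0 ≤ c) (hw : ∀ m, 1 ≤ w m)
    (hμ : ∀ m, |μ m| ≤ c * ν m) {n : ℕ} (hn : 0 < n) :
    |(∑ m ∈ range n, w m * s m) / (∑ m ∈ range n, w m) - v| ≤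
      c + (|(∑ m ∈ range n, (w m * (s m - v) - μ m)) / n|
        + c * |(∑ m ∈ range n, (w m - ν m)) / n|) := by
  set B := ∑ m ∈ range n, (w m * (s m - v) - μ m)
  set D := ∑ m ∈ range n, (w m - ν m)
  set W := ∑ m ∈ range n, w m
  have hn' : (0 : ℝ) < n := by exact_mod_cast hn
  have hnW : (n : ℝ) ≤ W := by simpa using sum_le_sum fun m (_ : m ∈ range n) => hw m
  have hW : 0 < W := hn'.trans_le hnW
  have hsplit : ∑ m ∈ range n, w m * s m - v * W = B + ∑ m ∈ range n, μ m := by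
    simp only [B, W, mul_sub, sum_sub_distrib, mul_sum]
    ring_nf
  have hμsum : |∑ m ∈ range n, μ m| ≤ c * W + c * |D| := by
    have hν : ∑ m ∈ range n, ν m = W - D := by simp only [D, W, sum_sub_distrib]; ring
    calc |∑ m ∈ range n, μ m| ≤ ∑ m ∈ range n, c * ν m :=
          (abs_sum_le_sum_abs _ _).trans (sum_le_sum fun m _ => hμ m)
      _ = c * W - c * D := by rw [← mul_sum, hν, mul_sub]
      _ ≤ c * W + c * |D| := by nlinarith [neg_abs_le D]
  have herr : 0 ≤ |B| + c * |D| := by positivity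
  calc |(∑ m ∈ range n, w m * s m) / W - v|
      = |∑ m ∈ range n, w m * s m - v * W| / W := by
        rw [div_sub' hW.ne', abs_div, abs_of_pos hW, mul_comm]
    _ ≤ (c * W + (|B| + c * |D|)) / W := by
        gcongr
        rw [hsplit]
        linarith [abs_add_le B (∑ m ∈ range n, μ m)]
    _ = c + (|B| + c * |D|) / W := by field_simp
    _ ≤ c + (|B| + c * |D|) / n := by gcongr
    _ = c + (|B / n| + c * |D / n|) := by
        rw [abs_div, abs_div, Nat.abs_cast]; field_simp

lemma abs_avg_sub_wavg_le {s w a μ ν : ℕ → ℝ} {c : ℝ} (v : ℝ) (hc : 0 ≤ c)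
    (hw : ∀ m, 1 ≤ w m) (ha : ∀ m, a m ≤ c) (hμ : ∀ m, |μ m| ≤ c * ν m) {n : ℕ} (hn : 0 < n) :
    |(∑ m ∈ range n, s m) / n - (∑ m ∈ range n, w m * s m) / (∑ m ∈ range n, w m)| ≤
      2 * c + ((∑ m ∈ range n, (|s m - v| - a m)) / n +
        (|(∑ m ∈ range n, (w m * (s m - v) - μ m)) / n|
          + c * |(∑ m ∈ range n, (w m - ν m)) / n|)) := by
  have htri := abs_sub_le ((∑ m ∈ range n, s m) / n) v
    ((∑ m ∈ range n, w m * s m) / (∑ m ∈ range n, w m))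
  rw [abs_sub_comm v] at htri
  linarith [abs_avg_sub_le (s := s) v ha hn, abs_wavg_sub_le (s := s) v hc hw hμ hn]

lemma limsup_le_of_le_add_of_tendsto_zero_s10 {α : Type*} {l : Filter α} [l.NeBot] {f e : α → ℝ}
    {c : ℝ} (hf : ∀ x, 0 ≤ f x) (hfe : ∀ᶠ x in l, f x ≤ c + e x) (he : Tendsto e l (𝓝 0)) :
    limsup f l ≤ c := by
  have hce : Tendsto (fun x => c + e x) l (𝓝 c) := by simpa using he.const_add c
  calc limsup f l ≤ limsup (fun x => c + e x) l :=
        limsup_le_limsup hfe (isCoboundedUnder_le_of_le l hf) hce.isBoundedUnder_le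
    _ = c := hce.limsup_eq

theorem stmt_10_general {Ω : Type*} [MeasurableSpace Ω] (P : Measure Ω) [IsProbabilityMeasure P]
    (C v ε : ℝ)
    (s w : ℕ → Ω → ℝ)
    (hs_meas : ∀ n, Measurable (s n)) (hw_meas : ∀ n, Measurable (w n))
    (hindep : iIndepFun (Sum.elim s w) P)
    (hs : ∀ n, ∀ᵐ ω ∂P, s n ω ∈ Set.Icc (0 : ℝ) 1)
    (hw : ∀ n, ∀ᵐ ω ∂P, w n ω ∈ Set.Icc (1 : ℝ) C)
    (hE : ∀ n, ∫ ω, |s n ω - v| ∂P ≤ ε / 2) :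
    ∀ᵐ ω ∂P, limsup (fun n : ℕ =>
      |(∑ m ∈ Finset.range n, s m ω) / n
        - (∑ m ∈ Finset.range n, w m ω * s m ω) / (∑ m ∈ Finset.range n, w m ω)|)
      atTop ≤ ε := by
  have hc : 0 ≤ ε / 2 := (integral_nonneg fun _ => abs_nonneg _).trans (hE 0)
  have hdev_le : ∀ n, ∀ᵐ ω ∂P, |s n ω - v| ≤ 1 + |v| := fun n =>
    (hs n).mono fun ω hω => (abs_sub _ _).trans (by rw [abs_of_nonneg hω.1]; linarith [hω.2])
  have hw_le : ∀ n, ∀ᵐ ω ∂P, |w n ω| ≤ C := fun n =>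
    (hw n).mono fun ω hω => by rw [abs_of_pos (zero_lt_one.trans_le hω.1)]; exact hω.2
  have hwdev_le : ∀ n, ∀ᵐ ω ∂P, |w n ω * (s n ω - v)| ≤ C * (1 + |v|) := fun n => by
    filter_upwards [hw_le n, hdev_le n] with ω h₁ h₂
    rw [abs_mul]; exact mul_le_mul h₁ h₂ (abs_nonneg _) ((abs_nonneg _).trans h₁)
  have hmean : ∀ n, |∫ ω, w n ω * (s n ω - v) ∂P| ≤ ε / 2 * ∫ ω, w n ω ∂P := fun n =>
    abs_integral_mul_le_of_indepFun
      ((hindep.indepFun (i := .inr n) (j := .inl n) (by simp)).comp measurable_id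
        (measurable_id.sub_const v))
      (hw_meas n).aestronglyMeasurable ((hs_meas n).sub_const v).aestronglyMeasurable
      ((hw n).mono fun ω hω => zero_le_one.trans hω.1)
      (abs_integral_le_integral_abs.trans (hE n))
  have hA := hindep.ae_tendsto_avg_sub_integral_comp hs_meas hw_meas
    (φ := fun p => |p.1 - v|) (by fun_prop) (by simpa only [abs_abs] using hdev_le)
  have hB := hindep.ae_tendsto_avg_sub_integral_comp hs_meas hw_meas
    (φ := fun p => p.2 * (p.1 - v)) (by fun_prop) hwdev_le
  have hW := hindep.ae_tendsto_avg_sub_integral_comp hs_meas hw_meas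
    (φ := fun p => p.2) measurable_snd hw_le
  filter_upwards [hA, hB, hW, ae_all_iff.2 hw] with ω hAω hBω hWω hwω
  have herr := hAω.add (hBω.abs.add (hWω.abs.const_mul (ε / 2)))
  rw [abs_zero, mul_zero, add_zero, add_zero] at herr
  refine limsup_le_of_le_add_of_tendsto_zero_s10 (fun n => abs_nonneg _) ?_ herr
  filter_upwards [eventually_gt_atTop 0] with n hn
  exact (abs_avg_sub_wavg_le v hc (fun m => (hwω m).1) hE hmean hn).trans_eq (by ring)

/-- **Example 11, part 1** (sufficient condition for ε-unbiased payoff observations).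
If the payoffs `s (n)` and weights `w (n)` (here `s n`, `w n` stand for `s(n+1)`,
`w(n+1)`, `n+1 = 1, 2, …`) form a mutually independent family, `s n ∈ [0,1]` and
`w n ∈ [1,C]` almost surely, and `E[|s n − v|] ≤ ε/2` for all `n`, then almost surely
`limsup_n |s̄(n) − s̃(n)| ≤ ε`, where `s̄` is the arithmetic and `s̃` the weighted
average. -/
theorem stmt_10 {Ω : Type*} [MeasurableSpace Ω] (P : Measure Ω) [IsProbabilityMeasure P]
    (C v ε : ℝ) (hC : 1 ≤ C) (hv : v ∈ Set.Icc (0 : ℝ) 1) (hε : 0 < ε)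
    (s w : ℕ → Ω → ℝ)
    (hs_meas : ∀ n, Measurable (s n)) (hw_meas : ∀ n, Measurable (w n))
    (hindep : iIndepFun (Sum.elim s w) P)
    (hs : ∀ n, ∀ᵐ ω ∂P, s n ω ∈ Set.Icc (0 : ℝ) 1)
    (hw : ∀ n, ∀ᵐ ω ∂P, w n ω ∈ Set.Icc (1 : ℝ) C)
    (hE : ∀ n, ∫ ω, |s n ω - v| ∂P ≤ ε / 2) :
    ∀ᵐ ω ∂P, limsup (fun n : ℕ =>
      |(∑ m ∈ Finset.range n, s m ω) / n
        - (∑ m ∈ Finset.range n, w m ω * s m ω) / (∑ m ∈ Finset.range n, w m ω)|)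
      atTop ≤ ε :=
  stmt_10_general P C v ε s w hs_meas hw_meas hindep hs hw hE
end

section
/- Let ε > 0, c ≥ 0, and let â : ℕ → A → B → ℝ be observed payoffs with â s i₀ j₀ ∈ [0,1] for all s, i₀, j₀ such that |â s i₀ j₀ − a i₀ j₀| ≤ cε for all s ≥ t₂ and all i₀, j₀. Then for every t ≥ t₂/ε, |ĝ_max(t) − g̃_max(t)| ≤ (c+1)ε, where ĝ_max(t) = max_{i₀∈A} (1/t) ∑_{s=1}^t â s i₀ (j s) and g̃_max(t) = max_{i₀∈A} (1/t) ∑_{s=1}^t a i₀ (j s). (Finite-time comparison of observed and exact maximum average payoffs, from the proof of Lemma 19.) -/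
open Finset

/-- **Finite-time comparison of observed and exact maximum average payoffs** (from the
proof of Lemma 19).  If the observed payoffs `â` satisfy `|â s i₀ j₀ − a i₀ j₀| ≤ cε`
for all `s ≥ t₂`, then for every `t ≥ t₂/ε` we have
`|ĝ_max(t) − g̃_max(t)| ≤ (c+1)ε`. -/
theorem stmt_12 {A B : Type*} [Fintype A] [Fintype B] [Nonempty A] [Nonempty B]
    (a : A → B → ℝ) (ha : ∀ i j, a i j ∈ Set.Icc (0 : ℝ) 1)
    (ε c : ℝ) (hε : 0 < ε) (hc : 0 ≤ c)
    (i : ℕ → A) (j : ℕ → B)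
    (ahat : ℕ → A → B → ℝ)
    (hahat01 : ∀ s i₀ j₀, ahat s i₀ j₀ ∈ Set.Icc (0 : ℝ) 1)
    (t₂ : ℕ)
    (herr : ∀ s : ℕ, t₂ ≤ s → ∀ i₀ j₀, |ahat s i₀ j₀ - a i₀ j₀| ≤ c * ε) :
    ∀ t : ℕ, (t₂ : ℝ) / ε ≤ t →
      |(univ.sup' univ_nonempty fun i₀ => (∑ s ∈ Finset.Icc 1 t, ahat s i₀ (j s)) / t)
        - univ.sup' univ_nonempty fun i₀ => (∑ s ∈ Finset.Icc 1 t, a i₀ (j s)) / t|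
        ≤ (c + 1) * ε := by
  intro t ht
  rcases Nat.eq_zero_or_pos t with rfl | htpos
  · simp only [Finset.Icc_eq_empty_of_lt (by norm_num : (1:ℕ) > 0), Finset.sum_empty]
    simp only [Nat.cast_zero, div_zero]
    norm_num
    positivity
  have htR : (0:ℝ) < t := by exact_mod_cast htpos
  have ht2 : (t₂ : ℝ) ≤ ε * t := by
    rw [div_le_iff₀ hε] at ht; linarith
  set K := (c + 1) * ε with hK
  have key : ∀ i₀ : A,
      |(∑ s ∈ Finset.Icc 1 t, ahat s i₀ (j s)) / t
        - (∑ s ∈ Finset.Icc 1 t, a i₀ (j s)) / t| ≤ K := by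
    intro i₀
    rw [div_sub_div_same, abs_div, abs_of_pos htR, div_le_iff₀ htR]
    calc |∑ s ∈ Finset.Icc 1 t, ahat s i₀ (j s) - ∑ s ∈ Finset.Icc 1 t, a i₀ (j s)|
        = |∑ s ∈ Finset.Icc 1 t, (ahat s i₀ (j s) - a i₀ (j s))| := by
          rw [Finset.sum_sub_distrib]
      _ ≤ ∑ s ∈ Finset.Icc 1 t, |ahat s i₀ (j s) - a i₀ (j s)| :=
          Finset.abs_sum_le_sum_abs _ _
      _ ≤ ∑ s ∈ Finset.Icc 1 t, (c * ε + if s < t₂ then 1 else 0) := by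
          apply Finset.sum_le_sum
          intro s _
          by_cases hs : s < t₂
          · simp only [hs, if_pos]
            have h1 := (ha i₀ (j s))
            have h2 := (hahat01 s i₀ (j s))
            simp only [Set.mem_Icc] at h1 h2
            have : |ahat s i₀ (j s) - a i₀ (j s)| ≤ 1 := by
              rw [abs_le]; constructor <;> linarith
            nlinarith [mul_nonneg hc hε.le]
          · simp only [hs, if_neg, not_false_iff, add_zero]
            exact herr s (le_of_not_gt hs) i₀ (j s)
      _ = (Finset.Icc 1 t).card * (c * ε)
            + ∑ s ∈ Finset.Icc 1 t, (if s < t₂ then (1:ℝ) else 0) := by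
          rw [Finset.sum_add_distrib, Finset.sum_const, nsmul_eq_mul]
      _ ≤ t * (c * ε) + t₂ := by
          have hcard : (Finset.Icc 1 t).card = t := by
            rw [Nat.card_Icc]; omega
          rw [hcard]
          have : ∑ s ∈ Finset.Icc 1 t, (if s < t₂ then (1:ℝ) else 0)
              = ((Finset.Icc 1 t).filter (· < t₂)).card := by
            simp [Finset.sum_boole]
          rw [this]
          have hsub : (Finset.Icc 1 t).filter (· < t₂) ⊆ Finset.Ico 1 t₂ := by
            intro s hs
            simp only [Finset.mem_filter, Finset.mem_Icc] at hs
            simp only [Finset.mem_Ico]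
            exact ⟨hs.1.1, hs.2⟩
          have := Finset.card_le_card hsub
          rw [Nat.card_Ico] at this
          have : ((Finset.Icc 1 t).filter (· < t₂)).card ≤ t₂ :=
            this.trans (Nat.sub_le _ _)
          have := (Nat.cast_le (α := ℝ)).mpr this
          linarith
      _ ≤ K * t := by
          rw [hK]; nlinarith
  rw [abs_sub_le_iff]
  constructor
  · rw [sub_le_iff_le_add]
    apply Finset.sup'_le
    intro i₀ _
    have h1 := key i₀
    rw [abs_le] at h1
    have h2 := Finset.le_sup' (f := fun i₀ => (∑ s ∈ Finset.Icc 1 t, a i₀ (j s)) / t)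
      (Finset.mem_univ i₀)
    linarith [h1.2]
  · rw [sub_le_iff_le_add]
    apply Finset.sup'_le
    intro i₀ _
    have h1 := key i₀
    rw [abs_le] at h1
    have h2 := Finset.le_sup' (f := fun i₀ => (∑ s ∈ Finset.Icc 1 t, ahat s i₀ (j s)) / t)
      (Finset.mem_univ i₀)
    linarith [h1.1]
end

section
/- Let n ≥ 1 and T ≥ 1 be natural numbers and let X₁, X₂, … be i.i.d. random variables uniformly distributed on Fin n. If t ≥ 4T·⌈2n·log(2n)⌉, then P[for every i ∈ Fin n, |{s ≤ t : X_s = i}| ≥ T] ≥ 1 − exp(−T/4). (Step 1 of the proof of Lemma 20: dividing the t draws into 4T blocks of length ⌈2n·log(2n)⌉, each block covers all of Fin n with probability at least 1/2, and a Chernoff bound for the binomial distribution B(4T, 1/2) gives P[B(4T,1/2) ≥ T] ≥ 1 − exp(−T/4).) -/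
/-!
Split the first `4T·m` draws, `m = ⌈2n log 2n⌉`, into `4T` consecutive blocks of length `m`.
A value occurring fewer than `T` times misses every draw of at least `3T + 1` of these blocks,
and by independence it misses a fixed set of `3T + 1` blocks with probability
`(1 - 1/n)^((3T+1)m) ≤ (2n)^(-(6T+2))`. A union bound over the at most `2^(4T)` sets of blocks
and the `n` values bounds the failure probability by `4^(-T) ≤ exp(-T/4)`.
-/
open Finset Function MeasureTheory ProbabilityTheory

def block (m j : ℕ) : Finset ℕ := Ioc (j * m) ((j + 1) * m)

lemma card_block (m j : ℕ) : #(block m j) = m := by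
  simp only [block, Nat.card_Ioc, add_mul, one_mul, Nat.add_sub_cancel_left]

lemma pairwise_disjoint_block (m : ℕ) : Pairwise (Disjoint on block m) := by
  intro j j' hne
  simp only [Function.onFun, block, Finset.disjoint_left, mem_Ioc]
  intro s hs hs'
  rcases Nat.lt_or_gt_of_ne hne with h | h
  · have : (j + 1) * m ≤ j' * m := Nat.mul_le_mul_right m h; omega
  · have : (j' + 1) * m ≤ j * m := Nat.mul_le_mul_right m h; omega

lemma block_subset_Icc {m j k : ℕ} (hj : j < k) : block m j ⊆ Icc 1 (k * m) := by
  intro s hs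
  simp only [block, mem_Ioc, mem_Icc] at hs ⊢
  have : (j + 1) * m ≤ k * m := Nat.mul_le_mul_right m hj; omega

lemma card_biUnion_block (m : ℕ) (S : Finset ℕ) : #(S.biUnion (block m)) = #S * m := by
  rw [card_biUnion ((pairwise_disjoint_block m).set_pairwise _),
    sum_const_nat fun j _ => card_block m j]

lemma exists_blocks_forall_not {p : ℕ → Prop} [DecidablePred p] {k m t T : ℕ} (hkt : k * m ≤ t)
    (hcount : #{s ∈ Icc 1 t | p s} < T) :
    ∃ S ∈ (range k).powersetCard (k + 1 - T), ∀ s ∈ S.biUnion (block m), ¬ p s := by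
  set hit := {j ∈ range k | ∃ s ∈ block m j, p s}
  have hhit : #hit < T := by
    refine lt_of_le_of_lt ?_ hcount
    calc #hit ≤ #(hit.biUnion fun j => {s ∈ block m j | p s}) :=
          card_le_card_biUnion
            (Set.PairwiseDisjoint.mono ((pairwise_disjoint_block m).set_pairwise _)
              fun j => filter_subset _ _)
            fun j hj => by simpa [hit, Finset.Nonempty] using (mem_filter.mp hj).2
      _ ≤ #{s ∈ Icc 1 t | p s} := by
          refine card_le_card fun s hs => ?_
          obtain ⟨j, hj, hs⟩ := mem_biUnion.mp hs
          rw [mem_filter] at hs ⊢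
          have hjk := mem_range.mp (mem_filter.mp hj).1
          exact ⟨Icc_subset_Icc_right hkt (block_subset_Icc hjk hs.1), hs.2⟩
  have hmissed : k + 1 - T ≤ #(range k \ hit) := by
    have hsub : hit ⊆ range k := filter_subset _ _
    rw [card_sdiff_of_subset hsub, card_range]; omega
  obtain ⟨S, hS, hcard⟩ := exists_subset_card_eq hmissed
  refine ⟨S, mem_powersetCard.mpr ⟨hS.trans sdiff_subset, hcard⟩, fun s hs hps => ?_⟩
  obtain ⟨j, hj, hsj⟩ := mem_biUnion.mp hs
  have hj' := mem_sdiff.mp (hS hj)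
  exact hj'.2 (mem_filter.mpr ⟨hj'.1, s, hsj, hps⟩)

section Occupancy

variable {Ω α : Type*} [MeasurableSpace Ω] {P : Measure Ω} [IsProbabilityMeasure P]
  [MeasurableSpace α] [MeasurableSingletonClass α] {X : ℕ → Ω → α}

lemma measure_biInter_ne_eq_pow (hX : ∀ s, Measurable (X s)) (hindep : iIndepFun X P)
    {i : α} {p : ENNReal} (hp : ∀ s, P {ω | X s ω = i} = p) (F : Finset ℕ) :
    P (⋂ s ∈ F, {ω | X s ω ≠ i}) = (1 - p) ^ #F := by
  rw [hindep.meas_biInter (s := fun s => {ω | X s ω ≠ i})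
      fun s _ => ⟨{i}ᶜ, (measurableSet_singleton i).compl, rfl⟩,
    prod_congr rfl fun s _ => ?_, prod_const]
  rw [← hp s]
  exact prob_compl_eq_one_sub (hX s (measurableSet_singleton i))

lemma measure_card_filter_eq_lt_le [DecidableEq α] (hX : ∀ s, Measurable (X s))
    (hindep : iIndepFun X P) {i : α} {p : ENNReal} (hp : ∀ s, P {ω | X s ω = i} = p)
    {k m t T : ℕ} (hkt : k * m ≤ t) :
    P {ω | #{s ∈ Icc 1 t | X s ω = i} < T} ≤
      k.choose (k + 1 - T) * (1 - p) ^ ((k + 1 - T) * m) := by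
  set 𝒮 := (range k).powersetCard (k + 1 - T)
  calc P {ω | #{s ∈ Icc 1 t | X s ω = i} < T}
      ≤ P (⋃ S ∈ 𝒮, ⋂ s ∈ S.biUnion (block m), {ω | X s ω ≠ i}) := by
        refine measure_mono fun ω hω => ?_
        obtain ⟨S, hS, hnot⟩ := exists_blocks_forall_not hkt hω
        exact Set.mem_biUnion hS (Set.mem_iInter₂.mpr hnot)
    _ ≤ ∑ S ∈ 𝒮, P (⋂ s ∈ S.biUnion (block m), {ω | X s ω ≠ i}) := measure_biUnion_finset_le _ _
    _ = ∑ S ∈ 𝒮, (1 - p) ^ ((k + 1 - T) * m) := sum_congr rfl fun S hS => by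
        rw [measure_biInter_ne_eq_pow hX hindep hp, card_biUnion_block, (mem_powersetCard.mp hS).2]
    _ = k.choose (k + 1 - T) * (1 - p) ^ ((k + 1 - T) * m) := by
        rw [sum_const, nsmul_eq_mul, card_powersetCard, card_range]

end Occupancy

open Real in
lemma one_sub_inv_pow_le_inv_pow {n m : ℕ} (hn : 1 ≤ n) (hm : 2 * n * log (2 * n) ≤ m) (r : ℕ) :
    (1 - (n : ℝ)⁻¹) ^ (r * m) ≤ ((2 * n : ℝ) ^ (2 * r))⁻¹ := by
  have hn' : (0 : ℝ) < n := by exact_mod_cast hn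
  have hrm : 2 * r * log (2 * n) ≤ r * m / n := by
    rw [le_div_iff₀ hn']
    nlinarith [mul_le_mul_of_nonneg_left hm (Nat.cast_nonneg (α := ℝ) r)]
  calc (1 - (n : ℝ)⁻¹) ^ (r * m) ≤ exp (-(n : ℝ)⁻¹) ^ (r * m) :=
        pow_le_pow_left₀ (sub_nonneg.mpr (inv_le_one_of_one_le₀ (by exact_mod_cast hn)))
          (one_sub_le_exp_neg _) _
    _ = exp (-(r * m / n)) := by rw [← exp_nat_mul]; push_cast; ring_nf
    _ ≤ exp (-(2 * r * log (2 * n))) := exp_le_exp.mpr (neg_le_neg hrm)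
    _ = ((2 * n : ℝ) ^ (2 * r))⁻¹ := by
        rw [exp_neg, ← Nat.cast_ofNat, ← Nat.cast_mul, exp_nat_mul, exp_log (by positivity)]

open Real in
lemma natCast_mul_choose_mul_pow_le_exp {n m : ℕ} (hn : 1 ≤ n) (hm : 2 * n * log (2 * n) ≤ m)
    (T : ℕ) :
    (n : ℝ) * (4 * T).choose (3 * T + 1) * (1 - (n : ℝ)⁻¹) ^ ((3 * T + 1) * m) ≤ exp (-T / 4) := by
  have hn' : (0 : ℝ) < n := by exact_mod_cast hn
  have hn1 : (1 : ℝ) ≤ n := by exact_mod_cast hn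
  calc (n : ℝ) * (4 * T).choose (3 * T + 1) * (1 - (n : ℝ)⁻¹) ^ ((3 * T + 1) * m)
      ≤ n * 2 ^ (4 * T) * ((2 * n : ℝ) ^ (2 * (3 * T + 1)))⁻¹ := by
        gcongr
        · exact pow_nonneg (sub_nonneg.mpr (inv_le_one_of_one_le₀ hn1)) _
        · exact_mod_cast Nat.choose_le_two_pow _ _
        · exact one_sub_inv_pow_le_inv_pow hn hm _
    _ = 1 / (2 ^ (2 * T + 2) * (n : ℝ) ^ (6 * T + 1)) := by
        field_simp
        ring
    _ ≤ 1 / 4 ^ T := by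
        refine one_div_le_one_div_of_le (by positivity) ?_
        calc (4 : ℝ) ^ T = 2 ^ (2 * T) := by rw [pow_mul]; norm_num
          _ ≤ 2 ^ (2 * T + 2) := pow_le_pow_right₀ (by norm_num) (by omega)
          _ ≤ 2 ^ (2 * T + 2) * (n : ℝ) ^ (6 * T + 1) :=
              le_mul_of_one_le_right (by positivity) (one_le_pow₀ hn1)
    _ = (1 / 4) ^ T := (one_div_pow _ _).symm
    _ ≤ exp (-1 / 4) ^ T := pow_le_pow_left₀ (by norm_num) (by linarith [add_one_le_exp (-1 / 4)]) _
    _ = exp (-T / 4) := by rw [← exp_nat_mul]; ring_nf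

lemma ofReal_one_sub_le_measure {Ω : Type*} [MeasurableSpace Ω] {P : Measure Ω}
    [IsProbabilityMeasure P] {s : Set Ω} {q : ℝ} (hq : 0 ≤ q) (h : P sᶜ ≤ ENNReal.ofReal q) :
    ENNReal.ofReal (1 - q) ≤ P s := by
  rw [ENNReal.ofReal_sub _ hq, ENNReal.ofReal_one, tsub_le_iff_right]
  calc 1 = P (s ∪ sᶜ) := by rw [Set.union_compl_self, measure_univ]
    _ ≤ P s + P sᶜ := measure_union_le _ _
    _ ≤ P s + ENNReal.ofReal q := add_le_add_right h _

lemma natCast_mul_one_sub_inv_pow_eq_ofReal {n : ℕ} (hn : 1 ≤ n) (c K : ℕ) :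
    (n : ENNReal) * c * (1 - (n : ENNReal)⁻¹) ^ K =
      ENNReal.ofReal ((n : ℝ) * c * (1 - (n : ℝ)⁻¹) ^ K) := by
  have hn' : (0 : ℝ) < n := by exact_mod_cast hn
  rw [ENNReal.ofReal_mul (by positivity), ENNReal.ofReal_mul (by positivity),
    ENNReal.ofReal_pow (sub_nonneg.mpr (inv_le_one_of_one_le₀ (by exact_mod_cast hn))),
    ENNReal.ofReal_sub _ (by positivity), ENNReal.ofReal_inv_of_pos hn', ENNReal.ofReal_one,
    ENNReal.ofReal_natCast, ENNReal.ofReal_natCast]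

theorem stmt_14_general (n : ℕ) (hn : 1 ≤ n)
    {Ω : Type*} [MeasurableSpace Ω] (P : Measure Ω) [IsProbabilityMeasure P]
    (X : ℕ → Ω → Fin n)
    (hX_meas : ∀ s, Measurable (X s))
    (hindep : iIndepFun X P)
    (hunif : ∀ (s : ℕ) (i : Fin n), P {ω | X s ω = i} = (n : ENNReal)⁻¹)
    (T : ℕ)
    (t : ℕ) (ht : 4 * T * ⌈2 * (n : ℝ) * Real.log (2 * n)⌉₊ ≤ t) :
    ENNReal.ofReal (1 - Real.exp (-(T : ℝ) / 4)) ≤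
      P {ω | ∀ i : Fin n, T ≤ ((Finset.Icc 1 t).filter (fun s => X s ω = i)).card} := by
  set m := ⌈2 * (n : ℝ) * Real.log (2 * n)⌉₊
  have hbad (i : Fin n) : P {ω | #{s ∈ Icc 1 t | X s ω = i} < T} ≤
      (4 * T).choose (3 * T + 1) * (1 - (n : ENNReal)⁻¹) ^ ((3 * T + 1) * m) := by
    have := measure_card_filter_eq_lt_le hX_meas hindep (fun s => hunif s i) (T := T) ht
    rwa [show 4 * T + 1 - T = 3 * T + 1 by omega] at this
  refine ofReal_one_sub_le_measure (Real.exp_nonneg _) ?_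
  calc P {ω | ∀ i : Fin n, T ≤ #{s ∈ Icc 1 t | X s ω = i}}ᶜ
      = P (⋃ i, {ω | #{s ∈ Icc 1 t | X s ω = i} < T}) := by
        congr 1; ext ω; simp
    _ ≤ ∑ i, P {ω | #{s ∈ Icc 1 t | X s ω = i} < T} := measure_iUnion_fintype_le _ _
    _ ≤ ∑ _i : Fin n, (4 * T).choose (3 * T + 1) * (1 - (n : ENNReal)⁻¹) ^ ((3 * T + 1) * m) :=
        sum_le_sum fun i _ => hbad i
    _ = ENNReal.ofReal
          (n * (4 * T).choose (3 * T + 1) * (1 - (n : ℝ)⁻¹) ^ ((3 * T + 1) * m)) := by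
        rw [sum_const, card_univ, Fintype.card_fin, nsmul_eq_mul, ← mul_assoc,
          natCast_mul_one_sub_inv_pow_eq_ofReal hn]
    _ ≤ ENNReal.ofReal (Real.exp (-T / 4)) :=
        ENNReal.ofReal_le_ofReal (natCast_mul_choose_mul_pow_le_exp hn (Nat.le_ceil _) T)

/-- **Step 1 of the proof of Lemma 20.**  Let `X₁, X₂, …` be i.i.d. uniform draws from
the `n`-element set `Fin n` and let `T ≥ 1`.  If `t ≥ 4T⌈2n log(2n)⌉`, then with
probability at least `1 − exp(−T/4)` every value `i ∈ Fin n` occurs at least `T` times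
among the first `t` draws. -/
theorem stmt_14 (n : ℕ) (hn : 1 ≤ n)
    {Ω : Type*} [MeasurableSpace Ω] (P : Measure Ω) [IsProbabilityMeasure P]
    (X : ℕ → Ω → Fin n)
    (hX_meas : ∀ s, Measurable (X s))
    (hindep : iIndepFun X P)
    (hunif : ∀ (s : ℕ) (i : Fin n), P {ω | X s ω = i} = (n : ENNReal)⁻¹)
    (T : ℕ) (hT : 1 ≤ T)
    (t : ℕ) (ht : 4 * T * ⌈2 * (n : ℝ) * Real.log (2 * n)⌉₊ ≤ t) :
    ENNReal.ofReal (1 - Real.exp (-(T : ℝ) / 4)) ≤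
      P {ω | ∀ i : Fin n, T ≤ ((Finset.Icc 1 t).filter (fun s => X s ω = i)).card} :=
  stmt_14_general n hn P X hX_meas hindep hunif T t ht
end
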